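/- arXiv:2507.09302 — 9 statements merged into one kernel-verified Lean document; each statement's English description precedes it below -/
import Mathlib

section
/- Under the multiplicative propensity model, the conditional density of the unmeasured confounder given treatment uptake does not depend on the instrument: if pr(A=1|U,Z,X) = exp{α₁(Z,X)+α₂(U,X)} and U ⟂ Z | X, then f(U | A=1, Z, X) = exp{α₂(U,X)} f(U|X) / ∫ exp{α₂(u,X)} f(u|X) du, which is free of Z; hence U ⟂ Z | A=1, X. -/
open MeasureTheory

/-- Under the multiplicative propensity model
`pr(A=1|U=u,Z=z,X=x) = exp{α₁(z,x)+α₂(u,x)}` with `U ⟂ Z | X` (so that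
`f(u|z,x) = f(u|x)`), Bayes' rule gives that the conditional density of `U` given
`{A=1, Z=z, X=x}`, namely
`exp{α₁(z,x)+α₂(u,x)} f(u|x) / ∫ exp{α₁(z,x)+α₂(u',x)} f(u'|x) dν(u')`,
equals `exp{α₂(u,x)} f(u|x) / ∫ exp{α₂(u',x)} f(u'|x) dν(u')`, which is free of `z`;
hence `U ⟂ Z | A=1, X`. -/
theorem miv_confounder_density_free_of_instrument
    (𝓤 𝓧 : Type*) [MeasurableSpace 𝓤] (ν : Measure 𝓤)
    (f : 𝓤 → 𝓧 → ℝ) (α₁ : ℝ → 𝓧 → ℝ) (α₂ : 𝓤 → 𝓧 → ℝ)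
    (hf : ∀ u x, 0 ≤ f u x)
    (hdens : ∀ x, ∫ u, f u x ∂ν = 1)
    (hprop : ∀ z x u, Real.exp (α₁ z x + α₂ u x) < 1)
    (hint : ∀ x, Integrable (fun u => Real.exp (α₂ u x) * f u x) ν)
    (hpos : ∀ x, 0 < ∫ u, Real.exp (α₂ u x) * f u x ∂ν) :
    ∀ z x u,
      (Real.exp (α₁ z x + α₂ u x) * f u x)
          / (∫ u', Real.exp (α₁ z x + α₂ u' x) * f u' x ∂ν)
        = (Real.exp (α₂ u x) * f u x) / (∫ u', Real.exp (α₂ u' x) * f u' x ∂ν) := by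
  intro z x u
  have h1 : ∀ u' : 𝓤, Real.exp (α₁ z x + α₂ u' x) * f u' x
      = Real.exp (α₁ z x) * (Real.exp (α₂ u' x) * f u' x) := by
    intro u'; rw [Real.exp_add]; ring
  have h2 : (∫ u', Real.exp (α₁ z x + α₂ u' x) * f u' x ∂ν)
      = Real.exp (α₁ z x) * ∫ u', Real.exp (α₂ u' x) * f u' x ∂ν := by
    simp_rw [h1]; exact integral_const_mul _ _
  rw [h1 u, h2, mul_div_mul_left _ _ (Real.exp_ne_zero _)]
end

section
/- The correction term θ(O) = ρ(X)·((2Z−1)/π_Z(X))·Ω(X)·[Y(1−A) − e_Z(X) − {A − p_Z(X)}δ(X)] has mean zero: E[θ(O)] = 0, where all nuisance functions are evaluated at their true values. -/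
open MeasureTheory

/-- The correction term
`θ(O) = ρ(X)·((2Z−1)/π_Z(X))·Ω(X)·[Y(1−A) − e_Z(X) − {A − p_Z(X)}δ(X)]`
has mean zero, `E[θ(O)] = 0`, when all nuisance functions are the true ones.

Here `mX` is the σ-algebra generated by the covariates `X`; the true nuisance functions
are `mX`-measurable functions characterized by conditional expectation identities:
`π₁ = pr(Z=1|X)`, `π₀ = pr(Z=0|X) = 1−π₁`, `pz·πz = E[A·𝕀(Z=z)|X]` (so `pz = pr(A=1|Z=z,X)`),
`ez·πz = E[Y(1−A)·𝕀(Z=z)|X]` (so `ez = E[Y(1−A)|Z=z,X]`); and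
`ρ = p₁π₁+p₀π₀ = pr(A=1|X)`, `Ω = 1/(p₁−p₀)`, `δ = (e₁−e₀)/(p₁−p₀)`,
`π_Z = Zπ₁+(1−Z)π₀`, `e_Z = Ze₁+(1−Z)e₀`, `p_Z = Zp₁+(1−Z)p₀`. -/
theorem correction_term_mean_zero
    (Ω : Type*) (mX : MeasurableSpace Ω) [m0 : MeasurableSpace Ω] (μ : Measure Ω) [IsProbabilityMeasure μ]
    (hmX : mX ≤ m0)
    (A Z Y : Ω → ℝ) (hAm : Measurable A) (hZm : Measurable Z) (hYm : Measurable Y)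
    (hA : ∀ ω, A ω = 0 ∨ A ω = 1) (hZ : ∀ ω, Z ω = 0 ∨ Z ω = 1)
    (p0 p1 π0 π1 e0 e1 : Ω → ℝ)
    (hp0m : Measurable[mX] p0) (hp1m : Measurable[mX] p1)
    (hπ0m : Measurable[mX] π0) (hπ1m : Measurable[mX] π1)
    (he0m : Measurable[mX] e0) (he1m : Measurable[mX] e1)
    (C : ℝ) (hbdd : ∀ ω, |p0 ω| ≤ C ∧ |p1 ω| ≤ C ∧ |e0 ω| ≤ C ∧ |e1 ω| ≤ C)
    (hπ1pos : ∀ ω, π1 ω ∈ Set.Ioo (0:ℝ) 1) (hπ01 : ∀ ω, π0 ω = 1 - π1 ω)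
    (ε : ℝ) (hε : 0 < ε) (hgap : ∀ ω, ε ≤ |p1 ω - p0 ω|)
    (hπ1 : μ[Z | mX] =ᵐ[μ] π1)
    (hp1 : μ[fun ω => A ω * Z ω | mX] =ᵐ[μ] fun ω => p1 ω * π1 ω)
    (hp0 : μ[fun ω => A ω * (1 - Z ω) | mX] =ᵐ[μ] fun ω => p0 ω * π0 ω)
    (he1 : μ[fun ω => Y ω * (1 - A ω) * Z ω | mX] =ᵐ[μ] fun ω => e1 ω * π1 ω)
    (he0 : μ[fun ω => Y ω * (1 - A ω) * (1 - Z ω) | mX] =ᵐ[μ] fun ω => e0 ω * π0 ω)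
    (hintY : Integrable (fun ω => Y ω * (1 - A ω)) μ)
    (hintYZ : Integrable (fun ω => Y ω * (1 - A ω) * Z ω) μ)
    (θ : Ω → ℝ)
    (hθ : ∀ ω, θ ω =
      (p1 ω * π1 ω + p0 ω * π0 ω)
        * ((2 * Z ω - 1) / (Z ω * π1 ω + (1 - Z ω) * π0 ω))
        * (1 / (p1 ω - p0 ω))
        * (Y ω * (1 - A ω) - (Z ω * e1 ω + (1 - Z ω) * e0 ω)
            - (A ω - (Z ω * p1 ω + (1 - Z ω) * p0 ω))
              * ((e1 ω - e0 ω) / (p1 ω - p0 ω))))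
    (hθint : Integrable θ μ) :
    ∫ ω, θ ω ∂μ = 0 := by
    classical
  -- σ-finiteness of the trimmed measure
  haveI : IsFiniteMeasure (μ.trim hmX) := isFiniteMeasure_trim hmX
  have lift : ∀ {f : Ω → ℝ}, Measurable[mX] f → Measurable[m0] f :=
    fun hf _ ht => hmX _ (hf ht)
  -- nonvanishing denominators
  have hπ1ne : ∀ ω, π1 ω ≠ 0 := fun ω => ne_of_gt (hπ1pos ω).1
  have hπ0ne : ∀ ω, π0 ω ≠ 0 := by
    intro ω; rw [hπ01 ω]; have := (hπ1pos ω).2; intro h; linarith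
  have hpne : ∀ ω, p1 ω - p0 ω ≠ 0 := by
    intro ω h; have := hgap ω; rw [h, abs_zero] at this; linarith
  -- the key pieces
  set δf : Ω → ℝ := fun ω => (e1 ω - e0 ω) / (p1 ω - p0 ω) with hδf_def
  set g1 : Ω → ℝ := fun ω =>
    (p1 ω * π1 ω + p0 ω * π0 ω) * (1 / (p1 ω - p0 ω)) / π1 ω with hg1_def
  set g0 : Ω → ℝ := fun ω =>
    (p1 ω * π1 ω + p0 ω * π0 ω) * (1 / (p1 ω - p0 ω)) / π0 ω with hg0_def
  set u1 : Ω → ℝ := fun ω =>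
    Z ω * (Y ω * (1 - A ω) - e1 ω - (A ω - p1 ω) * δf ω) with hu1_def
  set u0 : Ω → ℝ := fun ω =>
    (1 - Z ω) * (Y ω * (1 - A ω) - e0 ω - (A ω - p0 ω) * δf ω) with hu0_def
  -- pointwise decomposition of θ
  have hpt : ∀ ω, θ ω = g1 ω * u1 ω - g0 ω * u0 ω := by
    intro ω
    rcases hZ ω with h | h <;>
      · rw [hθ ω]
        simp only [hδf_def, hg1_def, hg0_def, hu1_def, hu0_def, h]
        field_simp [hπ1ne ω, hπ0ne ω, hpne ω]
        ring
  -- measurability (with respect to m0)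
  have hδfm : Measurable[mX] δf := (he1m.sub he0m).div (hp1m.sub hp0m)
  have hδm0 : Measurable[m0] δf := lift hδfm
  have hg1m : Measurable[mX] g1 :=
    (((hp1m.mul hπ1m).add (hp0m.mul hπ0m)).mul
      (measurable_const.div (hp1m.sub hp0m))).div hπ1m
  have hg0m : Measurable[mX] g0 :=
    (((hp1m.mul hπ1m).add (hp0m.mul hπ0m)).mul
      (measurable_const.div (hp1m.sub hp0m))).div hπ0m
  have hu1m : Measurable[m0] u1 :=
    hZm.mul (((hYm.mul (measurable_const.sub hAm)).sub (lift he1m)).sub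
      ((hAm.sub (lift hp1m)).mul hδm0))
  have hu0m : Measurable[m0] u0 :=
    (measurable_const.sub hZm).mul (((hYm.mul (measurable_const.sub hAm)).sub (lift he0m)).sub
      ((hAm.sub (lift hp0m)).mul hδm0))
  -- bound for δf
  have hδbd : ∀ ω, ‖δf ω‖ ≤ 2 * C / ε := by
    intro ω
    obtain ⟨h0, h1, h2, h3⟩ := hbdd ω
    have hnum : |e1 ω - e0 ω| ≤ 2 * C := by
      calc |e1 ω - e0 ω| ≤ |e1 ω| + |e0 ω| := abs_sub _ _
        _ ≤ 2 * C := by linarith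
    have hden := hgap ω
    simp only [hδf_def, Real.norm_eq_abs, abs_div]
    exact div_le_div₀ (by linarith [abs_nonneg (e1 ω)]) hnum hε hden
  -- basic integrabilities
  have hZint : Integrable Z μ := by
    refine Integrable.mono' (integrable_const 1) hZm.aestronglyMeasurable ?_
    filter_upwards with ω; rcases hZ ω with h | h <;> simp [h]
  have hZ'int : Integrable (fun ω => 1 - Z ω) μ := (integrable_const 1).sub hZint
  have hAZint : Integrable (fun ω => A ω * Z ω) μ := by
    refine Integrable.mono' (integrable_const 1) (hAm.mul hZm).aestronglyMeasurable ?_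
    filter_upwards with ω
    rcases hA ω with h | h <;> rcases hZ ω with h' | h' <;> simp [h, h']
  have hAZ'int : Integrable (fun ω => A ω * (1 - Z ω)) μ := by
    refine Integrable.mono' (integrable_const 1)
      (hAm.mul (measurable_const.sub hZm)).aestronglyMeasurable ?_
    filter_upwards with ω
    rcases hA ω with h | h <;> rcases hZ ω with h' | h' <;> simp [h, h']
  have hintYZ' : Integrable (fun ω => Y ω * (1 - A ω) * (1 - Z ω)) μ := by
    have : (fun ω => Y ω * (1 - A ω) * (1 - Z ω)) =
        fun ω => Y ω * (1 - A ω) - Y ω * (1 - A ω) * Z ω := by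
      funext ω; ring
    rw [this]; exact hintY.sub hintYZ
  -- coefficient functions
  set c1 : Ω → ℝ := fun ω => e1 ω - δf ω * p1 ω with hc1_def
  set c0 : Ω → ℝ := fun ω => e0 ω - δf ω * p0 ω with hc0_def
  have hc1m : Measurable[mX] c1 := he1m.sub (hδfm.mul hp1m)
  have hc0m : Measurable[mX] c0 := he0m.sub (hδfm.mul hp0m)
  have hc1bd : ∃ K, ∀ ω, ‖c1 ω‖ ≤ K := by
    refine ⟨C + 2 * C / ε * C, fun ω => ?_⟩
    obtain ⟨h0, h1, h2, h3⟩ := hbdd ω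
    have := hδbd ω
    simp only [hc1_def, Real.norm_eq_abs] at *
    calc |e1 ω - δf ω * p1 ω| ≤ |e1 ω| + |δf ω * p1 ω| := abs_sub _ _
      _ = |e1 ω| + |δf ω| * |p1 ω| := by rw [abs_mul]
      _ ≤ C + 2 * C / ε * C := by
          have h4 : (0:ℝ) ≤ |δf ω| := abs_nonneg _
          have h5 : (0:ℝ) ≤ |p1 ω| := abs_nonneg _
          nlinarith
  have hc0bd : ∃ K, ∀ ω, ‖c0 ω‖ ≤ K := by
    refine ⟨C + 2 * C / ε * C, fun ω => ?_⟩
    obtain ⟨h0, h1, h2, h3⟩ := hbdd ω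
    have := hδbd ω
    simp only [hc0_def, Real.norm_eq_abs] at *
    calc |e0 ω - δf ω * p0 ω| ≤ |e0 ω| + |δf ω * p0 ω| := abs_sub _ _
      _ = |e0 ω| + |δf ω| * |p0 ω| := by rw [abs_mul]
      _ ≤ C + 2 * C / ε * C := by
          have h4 : (0:ℝ) ≤ |δf ω| := abs_nonneg _
          have h5 : (0:ℝ) ≤ |p0 ω| := abs_nonneg _
          nlinarith
  -- integrabilities of the product terms
  have hintc1Z : Integrable (c1 * Z) μ :=
    hZint.bdd_mul (lift hc1m).aestronglyMeasurable (Filter.Eventually.of_forall hc1bd.choose_spec)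
  have hintc0Z' : Integrable (c0 * fun ω => 1 - Z ω) μ :=
    hZ'int.bdd_mul (lift hc0m).aestronglyMeasurable (Filter.Eventually.of_forall hc0bd.choose_spec)
  have hintd1 : Integrable (δf * fun ω => A ω * Z ω) μ :=
    hAZint.bdd_mul hδm0.aestronglyMeasurable (Filter.Eventually.of_forall hδbd)
  have hintd0 : Integrable (δf * fun ω => A ω * (1 - Z ω)) μ :=
    hAZ'int.bdd_mul hδm0.aestronglyMeasurable (Filter.Eventually.of_forall hδbd)
  -- decomposition of u1 and u0
  have hu1eq : u1 = (fun ω => Y ω * (1 - A ω) * Z ω) - c1 * Z - δf * fun ω => A ω * Z ω := by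
    funext ω
    simp only [hu1_def, hc1_def, Pi.sub_apply, Pi.mul_apply]
    ring
  have hu0eq : u0 = (fun ω => Y ω * (1 - A ω) * (1 - Z ω)) - (c0 * fun ω => 1 - Z ω)
      - δf * fun ω => A ω * (1 - Z ω) := by
    funext ω
    simp only [hu0_def, hc0_def, Pi.sub_apply, Pi.mul_apply]
    ring
  have hu1int : Integrable u1 μ := by
    rw [hu1eq]; exact (hintYZ.sub hintc1Z).sub hintd1
  have hu0int : Integrable u0 μ := by
    rw [hu0eq]; exact (hintYZ'.sub hintc0Z').sub hintd0
  -- conditional expectations vanish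
  have hcondc1Z : μ[c1 * Z | mX] =ᵐ[μ] fun ω => c1 ω * π1 ω := by
    refine (condExp_mul_of_stronglyMeasurable_left hc1m.stronglyMeasurable hintc1Z hZint).trans ?_
    filter_upwards [hπ1] with ω h; simp [h]
  have hcondd1 : μ[δf * fun ω => A ω * Z ω | mX] =ᵐ[μ] fun ω => δf ω * (p1 ω * π1 ω) := by
    refine (condExp_mul_of_stronglyMeasurable_left hδfm.stronglyMeasurable hintd1 hAZint).trans ?_
    filter_upwards [hp1] with ω h; simp [h]
  have hcondZ' : μ[fun ω => 1 - Z ω | mX] =ᵐ[μ] π0 := by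
    have h1 : μ[(fun _ => (1:ℝ)) - Z | mX] =ᵐ[μ] μ[fun _ => (1:ℝ) | mX] - μ[Z | mX] :=
      condExp_sub (integrable_const 1) hZint mX
    have h2 : μ[fun _ => (1:ℝ) | mX] = fun _ => (1:ℝ) := condExp_const hmX 1
    refine Filter.EventuallyEq.trans (by exact h1) ?_
    rw [h2]
    filter_upwards [hπ1] with ω h
    simp [Pi.sub_apply, h, hπ01 ω]
  have hcondc0Z' : μ[c0 * fun ω => 1 - Z ω | mX] =ᵐ[μ] fun ω => c0 ω * π0 ω := by
    refine (condExp_mul_of_stronglyMeasurable_left hc0m.stronglyMeasurable hintc0Z' hZ'int).trans ?_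
    filter_upwards [hcondZ'] with ω h; simp [h]
  have hcondd0 : μ[δf * fun ω => A ω * (1 - Z ω) | mX] =ᵐ[μ]
      fun ω => δf ω * (p0 ω * π0 ω) := by
    refine (condExp_mul_of_stronglyMeasurable_left hδfm.stronglyMeasurable hintd0 hAZ'int).trans ?_
    filter_upwards [hp0] with ω h; simp [h]
  have hu1cond : μ[u1 | mX] =ᵐ[μ] 0 := by
    rw [hu1eq]
    have hA1 : μ[(fun ω => Y ω * (1 - A ω) * Z ω) - c1 * Z - δf * fun ω => A ω * Z ω | mX]
        =ᵐ[μ] μ[(fun ω => Y ω * (1 - A ω) * Z ω) - c1 * Z | mX] -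
          μ[δf * fun ω => A ω * Z ω | mX] :=
      condExp_sub (hintYZ.sub hintc1Z) hintd1 mX
    have hA2 : μ[(fun ω => Y ω * (1 - A ω) * Z ω) - c1 * Z | mX]
        =ᵐ[μ] μ[fun ω => Y ω * (1 - A ω) * Z ω | mX] - μ[c1 * Z | mX] :=
      condExp_sub hintYZ hintc1Z mX
    refine hA1.trans ?_
    filter_upwards [hA2, he1, hcondc1Z, hcondd1] with ω h2 h3 h4 h5
    simp only [Pi.sub_apply, Pi.zero_apply, h2, h3, h4, h5]; simp only [hc1_def]
    ring
  have hu0cond : μ[u0 | mX] =ᵐ[μ] 0 := by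
    rw [hu0eq]
    have hA1 : μ[(fun ω => Y ω * (1 - A ω) * (1 - Z ω)) - (c0 * fun ω => 1 - Z ω)
          - δf * fun ω => A ω * (1 - Z ω) | mX]
        =ᵐ[μ] μ[(fun ω => Y ω * (1 - A ω) * (1 - Z ω)) - (c0 * fun ω => 1 - Z ω) | mX] -
          μ[δf * fun ω => A ω * (1 - Z ω) | mX] :=
      condExp_sub (hintYZ'.sub hintc0Z') hintd0 mX
    have hA2 : μ[(fun ω => Y ω * (1 - A ω) * (1 - Z ω)) - (c0 * fun ω => 1 - Z ω) | mX]
        =ᵐ[μ] μ[fun ω => Y ω * (1 - A ω) * (1 - Z ω) | mX] - μ[c0 * fun ω => 1 - Z ω | mX] :=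
      condExp_sub hintYZ' hintc0Z' mX
    refine hA1.trans ?_
    filter_upwards [hA2, he0, hcondc0Z', hcondd0] with ω h2 h3 h4 h5
    simp only [Pi.sub_apply, Pi.zero_apply, h2, h3, h4, h5]; simp only [hc0_def]
    ring
  -- integrability of g1*u1 and g0*u0 via domination by θ
  have hdom1 : ∀ ω, ‖g1 ω * u1 ω‖ ≤ ‖θ ω‖ := by
    intro ω
    rcases hZ ω with h | h
    · have : u1 ω = 0 := by simp [hu1_def, h]
      simp [this, norm_nonneg]
    · have h0 : u0 ω = 0 := by simp [hu0_def, h]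
      have : θ ω = g1 ω * u1 ω := by rw [hpt ω, h0]; ring
      rw [this]
  have hdom0 : ∀ ω, ‖g0 ω * u0 ω‖ ≤ ‖θ ω‖ := by
    intro ω
    rcases hZ ω with h | h
    · have h1 : u1 ω = 0 := by simp [hu1_def, h]
      have : θ ω = -(g0 ω * u0 ω) := by rw [hpt ω, h1]; ring
      rw [this, norm_neg]
    · have : u0 ω = 0 := by simp [hu0_def, h]
      simp [this, norm_nonneg]
  have hint1 : Integrable (fun ω => g1 ω * u1 ω) μ := by
    refine hθint.mono ((lift hg1m).mul hu1m).aestronglyMeasurable ?_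
    filter_upwards with ω; exact hdom1 ω
  have hint0 : Integrable (fun ω => g0 ω * u0 ω) μ := by
    refine hθint.mono ((lift hg0m).mul hu0m).aestronglyMeasurable ?_
    filter_upwards with ω; exact hdom0 ω
  -- the two integrals vanish
  have hI1 : ∫ ω, g1 ω * u1 ω ∂μ = 0 := by
    have hpull : μ[g1 * u1 | mX] =ᵐ[μ] g1 * μ[u1 | mX] :=
      condExp_mul_of_stronglyMeasurable_left hg1m.stronglyMeasurable hint1 hu1int
    have hzero : μ[g1 * u1 | mX] =ᵐ[μ] 0 := by
      refine hpull.trans ?_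
      filter_upwards [hu1cond] with ω h
      simp [Pi.mul_apply, h]
    calc ∫ ω, g1 ω * u1 ω ∂μ = ∫ ω, (g1 * u1) ω ∂μ := rfl
      _ = ∫ ω, (μ[g1 * u1 | mX]) ω ∂μ := (integral_condExp hmX).symm
      _ = ∫ ω, (0 : Ω → ℝ) ω ∂μ := integral_congr_ae hzero
      _ = 0 := by simp
  have hI0 : ∫ ω, g0 ω * u0 ω ∂μ = 0 := by
    have hpull : μ[g0 * u0 | mX] =ᵐ[μ] g0 * μ[u0 | mX] :=
      condExp_mul_of_stronglyMeasurable_left hg0m.stronglyMeasurable hint0 hu0int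
    have hzero : μ[g0 * u0 | mX] =ᵐ[μ] 0 := by
      refine hpull.trans ?_
      filter_upwards [hu0cond] with ω h
      simp [Pi.mul_apply, h]
    calc ∫ ω, g0 ω * u0 ω ∂μ = ∫ ω, (g0 * u0) ω ∂μ := rfl
      _ = ∫ ω, (μ[g0 * u0 | mX]) ω ∂μ := (integral_condExp hmX).symm
      _ = ∫ ω, (0 : Ω → ℝ) ω ∂μ := integral_congr_ae hzero
      _ = 0 := by simp
  -- conclude
  calc ∫ ω, θ ω ∂μ = ∫ ω, (g1 ω * u1 ω - g0 ω * u0 ω) ∂μ := by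
        exact integral_congr_ae (Filter.Eventually.of_forall hpt)
    _ = (∫ ω, g1 ω * u1 ω ∂μ) - ∫ ω, g0 ω * u0 ω ∂μ := integral_sub hint1 hint0
    _ = 0 := by rw [hI1, hI0]; ring
end

section
/- The efficient influence function EIF(O;ψ) = (1/pr(A=1))[A{Y + δ(X) − ψ} + θ(O)] is an unbiased estimating function when p₀(X), e₀(X), and δ(X) are evaluated at their true values, regardless of whether p₁(X), e₁(X), and π_z(X) are misspecified: E[EIF(O; ψ, e₁*, e₀, p₁*, p₀, π_z*, δ)] = 0. -/
open MeasureTheory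

lemma intBdd {Ω : Type*} {mΩ : MeasurableSpace Ω} (μ : @MeasureTheory.Measure Ω mΩ)
    [IsFiniteMeasure μ] {f : Ω → ℝ} (hf : Measurable[mΩ] f) {c : ℝ}
    (h : ∀ ω, |f ω| ≤ c) : Integrable f μ :=
  ⟨hf.aestronglyMeasurable, HasFiniteIntegral.of_bounded (C := c)
    (ae_of_all μ (by simpa [Real.norm_eq_abs] using h))⟩

lemma keyZero {Ω : Type*} {mΩ : MeasurableSpace Ω} {μ : @MeasureTheory.Measure Ω mΩ}
    [IsProbabilityMeasure μ] {m : MeasurableSpace Ω} (hm : m ≤ mΩ) {f X : Ω → ℝ}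
    (hf : Measurable[m] f) (hX : Integrable X μ)
    (hfX : Integrable (fun ω => f ω * X ω) μ)
    (h0 : μ[X|m] =ᵐ[μ] 0) : ∫ ω, f ω * X ω ∂μ = 0 := by
  haveI : SigmaFinite (μ.trim hm) := by
    have : IsFiniteMeasure (μ.trim hm) := isFiniteMeasure_trim hm
    infer_instance
  have hpull : μ[f * X|m] =ᵐ[μ] f * μ[X|m] :=
    condExp_mul_of_stronglyMeasurable_left hf.stronglyMeasurable hfX hX
  have h1 : μ[f * X|m] =ᵐ[μ] (fun _ => (0:ℝ)) := by
    filter_upwards [hpull, h0] with ω h1 h2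
    simp only [Pi.mul_apply] at h1
    simp [h1, h2]
  have h2 : ∫ ω, f ω * X ω ∂μ = ∫ ω, (μ[f * X|m]) ω ∂μ :=
    (integral_condExp (f := f * X) hm).symm
  rw [h2, integral_congr_ae h1, integral_zero]

/-- multiple robustness, model 𝓜₁: the efficient influence function
`EIF(O;ψ) = (1/pr(A=1))[A{Y + δ(X) − ψ} + θ*(O)]` with
`θ*(O) = ρ*(X)((2Z−1)/π*_Z(X))Ω*(X)[Y(1−A) − e₀(X) − {A−p₀(X)}δ(X)]`
is an unbiased estimating function when `p₀(X)`, `e₀(X)` and `δ(X)` are evaluated at their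
true values, regardless of the (misspecified, arbitrary bounded `mX`-measurable) `ρ*`,
`Ω*` and `π*_z ∈ (0,1)`: `E[EIF(O; ψ, e₁*, e₀, p₁*, p₀, π_z*, δ)] = 0`.

True nuisances are `mX`-measurable functions characterized by conditional expectation
identities (`mX` = σ-algebra of `X`); `δ = (e₁−e₀)/(p₁−p₀)` is the true one;
`ψ = E[Y|A=1] + E[Aδ(X)]/pr(A=1)` is encoded by `hψ`. -/
theorem eif_unbiased_M1
    (Ω : Type*) (mX : MeasurableSpace Ω) [m0 : MeasurableSpace Ω] (μ : Measure Ω) [IsProbabilityMeasure μ]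
    (hmX : mX ≤ m0)
    (A Z Y : Ω → ℝ) (hAm : Measurable A) (hZm : Measurable Z) (hYm : Measurable Y)
    (hA : ∀ ω, A ω = 0 ∨ A ω = 1) (hZ : ∀ ω, Z ω = 0 ∨ Z ω = 1)
    (p0 p1 π0 π1 e0 e1 : Ω → ℝ)
    (hp0m : Measurable[mX] p0) (hp1m : Measurable[mX] p1)
    (hπ0m : Measurable[mX] π0) (hπ1m : Measurable[mX] π1)
    (he0m : Measurable[mX] e0) (he1m : Measurable[mX] e1)
    (C : ℝ) (hbdd : ∀ ω, |p0 ω| ≤ C ∧ |p1 ω| ≤ C ∧ |e0 ω| ≤ C ∧ |e1 ω| ≤ C)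
    (hπ1pos : ∀ ω, π1 ω ∈ Set.Ioo (0:ℝ) 1) (hπ01 : ∀ ω, π0 ω = 1 - π1 ω)
    (ε : ℝ) (hε : 0 < ε) (hgap : ∀ ω, ε ≤ |p1 ω - p0 ω|)
    (hπ1 : μ[Z | mX] =ᵐ[μ] π1)
    (hp1 : μ[fun ω => A ω * Z ω | mX] =ᵐ[μ] fun ω => p1 ω * π1 ω)
    (hp0 : μ[fun ω => A ω * (1 - Z ω) | mX] =ᵐ[μ] fun ω => p0 ω * π0 ω)
    (he1 : μ[fun ω => Y ω * (1 - A ω) * Z ω | mX] =ᵐ[μ] fun ω => e1 ω * π1 ω)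
    (he0 : μ[fun ω => Y ω * (1 - A ω) * (1 - Z ω) | mX] =ᵐ[μ] fun ω => e0 ω * π0 ω)
    -- misspecified (arbitrary, bounded, mX-measurable) nuisance functions
    (ρstar Ωstar πstar0 πstar1 : Ω → ℝ)
    (hρsm : Measurable[mX] ρstar) (hΩsm : Measurable[mX] Ωstar)
    (hπs0m : Measurable[mX] πstar0) (hπs1m : Measurable[mX] πstar1)
    (hρsb : ∀ ω, |ρstar ω| ≤ C) (hΩsb : ∀ ω, |Ωstar ω| ≤ C)
    (hπspos : ∀ ω, πstar0 ω ∈ Set.Ioo (0:ℝ) 1 ∧ πstar1 ω ∈ Set.Ioo (0:ℝ) 1)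
    -- definitions of δ (true), ψ and the EIF
    (δ : Ω → ℝ) (hδ : ∀ ω, δ ω = (e1 ω - e0 ω) / (p1 ω - p0 ω))
    (ψ : ℝ) (hPA : 0 < ∫ ω, A ω ∂μ)
    (hψ : ψ * (∫ ω, A ω ∂μ) = ∫ ω, A ω * (Y ω + δ ω) ∂μ)
    (EIF : Ω → ℝ)
    (hEIF : ∀ ω, EIF ω = (1 / ∫ ω', A ω' ∂μ) *
      (A ω * (Y ω + δ ω - ψ)
        + ρstar ω * ((2 * Z ω - 1) / (Z ω * πstar1 ω + (1 - Z ω) * πstar0 ω))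
            * Ωstar ω
            * (Y ω * (1 - A ω) - e0 ω - (A ω - p0 ω) * δ ω)))
    (hintAY : Integrable (fun ω => A ω * Y ω) μ)
    (hintY : Integrable (fun ω => Y ω * (1 - A ω)) μ)
    (hintYZ : Integrable (fun ω => Y ω * (1 - A ω) * Z ω) μ)
    (hEIFint : Integrable EIF μ) :
    ∫ ω, EIF ω ∂μ = 0 := by
  classical
  set c : ℝ := ∫ ω, A ω ∂μ with hcdef
  have hc0 : c ≠ 0 := ne_of_gt hPA
  -- bounds on indicators
  have hA1 : ∀ ω, |A ω| ≤ 1 := fun ω => by rcases hA ω with h | h <;> simp [h]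
  have hZ1 : ∀ ω, |Z ω| ≤ 1 := fun ω => by rcases hZ ω with h | h <;> simp [h]
  have hZ1' : ∀ ω, |1 - Z ω| ≤ 1 := fun ω => by rcases hZ ω with h | h <;> simp [h]
  have hne : Nonempty Ω := Set.nonempty_iff_univ_nonempty.mpr
    (@MeasureTheory.nonempty_of_measure_ne_zero Ω m0 μ Set.univ (by simp))
  obtain ⟨ω0⟩ := hne
  have hC0 : 0 ≤ C := le_trans (abs_nonneg _) (hbdd ω0).1
  -- measurability to m0
  have hAM : Measurable[m0] A := hAm
  have hZM : Measurable[m0] Z := hZm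
  have hYM : Measurable[m0] Y := hYm
  have hp0M : Measurable[m0] p0 := hp0m.mono hmX le_rfl
  have hp1M : Measurable[m0] p1 := hp1m.mono hmX le_rfl
  have he0M : Measurable[m0] e0 := he0m.mono hmX le_rfl
  have he1M : Measurable[m0] e1 := he1m.mono hmX le_rfl
  have hρM : Measurable[m0] ρstar := hρsm.mono hmX le_rfl
  have hΩM : Measurable[m0] Ωstar := hΩsm.mono hmX le_rfl
  have hπs0M : Measurable[m0] πstar0 := hπs0m.mono hmX le_rfl
  have hπs1M : Measurable[m0] πstar1 := hπs1m.mono hmX le_rfl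
  -- δ
  have hδfun : δ = fun ω => (e1 ω - e0 ω) / (p1 ω - p0 ω) := funext hδ
  have hδm : Measurable[mX] δ := by rw [hδfun]; exact (he1m.sub he0m).div (hp1m.sub hp0m)
  have hδM : Measurable[m0] δ := hδm.mono hmX le_rfl
  have hδb : ∀ ω, |δ ω| ≤ 2 * C / ε := by
    intro ω
    rw [hδ ω, abs_div]
    have hnum : |e1 ω - e0 ω| ≤ 2 * C := by
      have h1 := (hbdd ω).2.2.1
      have h2 := (hbdd ω).2.2.2
      calc |e1 ω - e0 ω| ≤ |e1 ω| + |e0 ω| := abs_sub _ _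
        _ ≤ 2 * C := by linarith
    exact div_le_div₀ (by linarith) hnum hε (hgap ω)
  have hδkey : ∀ ω, δ ω * (p1 ω - p0 ω) = e1 ω - e0 ω := by
    intro ω
    have hne : p1 ω - p0 ω ≠ 0 := by
      intro h; have := hgap ω; rw [h, abs_zero] at this; linarith
    rw [hδ ω, div_mul_cancel₀ _ hne]
  set D : ℝ := 2 * C / ε with hDdef
  -- the main pieces
  set R : Ω → ℝ := fun ω => Y ω * (1 - A ω) - e0 ω - (A ω - p0 ω) * δ ω with hRdef
  set T : Ω → ℝ := fun ω => ρstar ω * ((2 * Z ω - 1) / (Z ω * πstar1 ω + (1 - Z ω) * πstar0 ω))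
      * Ωstar ω * R ω with hTdef
  set U : Ω → ℝ := fun ω => A ω * (Y ω + δ ω - ψ) with hUdef
  -- integrability of basic pieces
  have iA : Integrable A μ := intBdd μ hAM hA1
  have iZ : Integrable Z μ := intBdd μ hZM hZ1
  have iAδ : Integrable (fun ω => A ω * δ ω) μ := by
    refine intBdd μ (hAM.mul hδM) (c := D) fun ω => ?_
    rw [abs_mul]
    calc |A ω| * |δ ω| ≤ 1 * D := mul_le_mul (hA1 ω) (hδb ω) (abs_nonneg _) zero_le_one
      _ = D := one_mul D
  have ie0Z : Integrable (fun ω => e0 ω * Z ω) μ := by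
    refine intBdd μ (he0M.mul hZM) (c := C) fun ω => ?_
    rw [abs_mul]
    calc |e0 ω| * |Z ω| ≤ C * 1 := mul_le_mul (hbdd ω).2.2.1 (hZ1 ω) (abs_nonneg _) hC0
      _ = C := mul_one C
  have ie0Z' : Integrable (fun ω => e0 ω * (1 - Z ω)) μ := by
    refine intBdd μ (he0M.mul (measurable_const.sub hZM)) (c := C) fun ω => ?_
    rw [abs_mul]
    calc |e0 ω| * |1 - Z ω| ≤ C * 1 := mul_le_mul (hbdd ω).2.2.1 (hZ1' ω) (abs_nonneg _) hC0
      _ = C := mul_one C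
  have iδAZ : Integrable (fun ω => δ ω * (A ω * Z ω)) μ := by
    refine intBdd μ (hδM.mul (hAM.mul hZM)) (c := D) fun ω => ?_
    rw [abs_mul, abs_mul]
    have h1 : |A ω| * |Z ω| ≤ 1 := by
      calc |A ω| * |Z ω| ≤ 1 * 1 := mul_le_mul (hA1 ω) (hZ1 ω) (abs_nonneg _) zero_le_one
        _ = 1 := one_mul 1
    have hD0 : 0 ≤ D := by rw [hDdef]; positivity
    calc |δ ω| * (|A ω| * |Z ω|) ≤ D * 1 :=
        mul_le_mul (hδb ω) h1 (by positivity) hD0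
      _ = D := mul_one D
  have iδAZ' : Integrable (fun ω => δ ω * (A ω * (1 - Z ω))) μ := by
    refine intBdd μ (hδM.mul (hAM.mul (measurable_const.sub hZM))) (c := D) fun ω => ?_
    rw [abs_mul, abs_mul]
    have h1 : |A ω| * |1 - Z ω| ≤ 1 := by
      calc |A ω| * |1 - Z ω| ≤ 1 * 1 := mul_le_mul (hA1 ω) (hZ1' ω) (abs_nonneg _) zero_le_one
        _ = 1 := one_mul 1
    have hD0 : 0 ≤ D := by rw [hDdef]; positivity
    calc |δ ω| * (|A ω| * |1 - Z ω|) ≤ D * 1 :=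
        mul_le_mul (hδb ω) h1 (by positivity) hD0
      _ = D := mul_one D
  have ip0δZ : Integrable (fun ω => p0 ω * δ ω * Z ω) μ := by
    refine intBdd μ ((hp0M.mul hδM).mul hZM) (c := C * D) fun ω => ?_
    rw [abs_mul, abs_mul]
    have hD0 : 0 ≤ D := by rw [hDdef]; positivity
    calc |p0 ω| * |δ ω| * |Z ω| ≤ C * D * 1 :=
        mul_le_mul (mul_le_mul (hbdd ω).1 (hδb ω) (abs_nonneg _) hC0) (hZ1 ω)
          (abs_nonneg _) (by positivity)
      _ = C * D := mul_one _
  have ip0δZ' : Integrable (fun ω => p0 ω * δ ω * (1 - Z ω)) μ := by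
    refine intBdd μ ((hp0M.mul hδM).mul (measurable_const.sub hZM)) (c := C * D) fun ω => ?_
    rw [abs_mul, abs_mul]
    have hD0 : 0 ≤ D := by rw [hDdef]; positivity
    calc |p0 ω| * |δ ω| * |1 - Z ω| ≤ C * D * 1 :=
        mul_le_mul (mul_le_mul (hbdd ω).1 (hδb ω) (abs_nonneg _) hC0) (hZ1' ω)
          (abs_nonneg _) (by positivity)
      _ = C * D := mul_one _
  have iAZ : Integrable (fun ω => A ω * Z ω) μ := by
    refine intBdd μ (hAM.mul hZM) (c := 1) fun ω => ?_
    rw [abs_mul]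
    calc |A ω| * |Z ω| ≤ 1 * 1 := mul_le_mul (hA1 ω) (hZ1 ω) (abs_nonneg _) zero_le_one
      _ = 1 := one_mul 1
  have iAZ' : Integrable (fun ω => A ω * (1 - Z ω)) μ := by
    refine intBdd μ (hAM.mul (measurable_const.sub hZM)) (c := 1) fun ω => ?_
    rw [abs_mul]
    calc |A ω| * |1 - Z ω| ≤ 1 * 1 := mul_le_mul (hA1 ω) (hZ1' ω) (abs_nonneg _) zero_le_one
      _ = 1 := one_mul 1
  have hintYZ' : Integrable (fun ω => Y ω * (1 - A ω) * (1 - Z ω)) μ := by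
    have := hintY.sub hintYZ
    exact this.congr (ae_of_all _ fun ω => by simp only [Pi.sub_apply]; ring)
  -- integrability of Z * R and (1 - Z) * R
  have iZR : Integrable (fun ω => Z ω * R ω) μ := by
    have h := ((hintYZ.sub ie0Z).sub (iδAZ.sub ip0δZ))
    refine h.congr (ae_of_all _ fun ω => ?_)
    simp only [Pi.sub_apply, hRdef]; ring
  have iZR' : Integrable (fun ω => (1 - Z ω) * R ω) μ := by
    have h := ((hintYZ'.sub ie0Z').sub (iδAZ'.sub ip0δZ'))
    refine h.congr (ae_of_all _ fun ω => ?_)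
    simp only [Pi.sub_apply, hRdef]; ring
  -- conditional expectations vanish
  haveI hsf : SigmaFinite (μ.trim hmX) := by
    have : IsFiniteMeasure (μ.trim hmX) := isFiniteMeasure_trim hmX
    infer_instance
  have hZR0 : μ[fun ω => Z ω * R ω | mX] =ᵐ[μ] 0 := by
    have hdec : (fun ω => Z ω * R ω) =
        ((fun ω => Y ω * (1 - A ω) * Z ω) - (fun ω => e0 ω * Z ω)) -
        ((fun ω => δ ω * (A ω * Z ω)) - (fun ω => p0 ω * δ ω * Z ω)) := by
      funext ω; simp only [Pi.sub_apply, hRdef]; ring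
    have h1 := condExp_sub (μ := μ) (m := mX) (hintYZ.sub ie0Z) (iδAZ.sub ip0δZ)
    have h2 := condExp_sub (μ := μ) (m := mX) hintYZ ie0Z
    have h3 := condExp_sub (μ := μ) (m := mX) iδAZ ip0δZ
    -- pull-out lemmas
    have hpe0 : μ[fun ω => e0 ω * Z ω | mX] =ᵐ[μ] fun ω => e0 ω * π1 ω := by
      have := condExp_mul_of_stronglyMeasurable_left (μ := μ) he0m.stronglyMeasurable
        (show Integrable (e0 * Z) μ from ie0Z) iZ
      filter_upwards [this, hπ1] with ω hω hω2
      simpa [hω2, Pi.mul_def] using hω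
    have hpδ : μ[fun ω => δ ω * (A ω * Z ω) | mX] =ᵐ[μ] fun ω => δ ω * (p1 ω * π1 ω) := by
      have := condExp_mul_of_stronglyMeasurable_left (μ := μ) hδm.stronglyMeasurable
        (show Integrable (δ * fun ω => A ω * Z ω) μ from iδAZ) iAZ
      filter_upwards [this, hp1] with ω hω hω2
      simpa [hω2, Pi.mul_def] using hω
    have hpp0δ : μ[fun ω => p0 ω * δ ω * Z ω | mX] =ᵐ[μ] fun ω => p0 ω * δ ω * π1 ω := by
      have := condExp_mul_of_stronglyMeasurable_left (μ := μ) (hp0m.mul hδm).stronglyMeasurable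
        (show Integrable ((fun ω => p0 ω * δ ω) * Z) μ from ip0δZ) iZ
      filter_upwards [this, hπ1] with ω hω hω2
      simpa [hω2, Pi.mul_def] using hω
    rw [hdec]
    filter_upwards [h1, h2, h3, he1, hpe0, hpδ, hpp0δ] with ω h1 h2 h3 he1 hpe0 hpδ hpp0δ
    simp only [Pi.sub_apply, Pi.zero_apply] at *
    rw [h1, h2, h3, he1, hpe0, hpδ, hpp0δ]
    linear_combination (-(π1 ω)) * hδkey ω
  have hZ'R0 : μ[fun ω => (1 - Z ω) * R ω | mX] =ᵐ[μ] 0 := by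
    have hdec : (fun ω => (1 - Z ω) * R ω) =
        ((fun ω => Y ω * (1 - A ω) * (1 - Z ω)) - (fun ω => e0 ω * (1 - Z ω))) -
        ((fun ω => δ ω * (A ω * (1 - Z ω))) - (fun ω => p0 ω * δ ω * (1 - Z ω))) := by
      funext ω; simp only [Pi.sub_apply, hRdef]; ring
    have iZc : Integrable (fun ω => 1 - Z ω) μ := (integrable_const 1).sub iZ
    have hπ0ae : μ[fun ω => 1 - Z ω | mX] =ᵐ[μ] π0 := by
      have h := condExp_sub (μ := μ) (m := mX) (integrable_const (1:ℝ)) iZ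
      have hc1 : μ[fun _ : Ω => (1:ℝ) | mX] = fun _ => (1:ℝ) := condExp_const hmX 1
      filter_upwards [h, hπ1] with ω hω hω2
      have : (fun ω => 1 - Z ω) = (fun _ : Ω => (1:ℝ)) - Z := by funext x; simp
      rw [this, hω]
      simp only [Pi.sub_apply, hc1, hω2, hπ01 ω]
    have h1 := condExp_sub (μ := μ) (m := mX) (hintYZ'.sub ie0Z') (iδAZ'.sub ip0δZ')
    have h2 := condExp_sub (μ := μ) (m := mX) hintYZ' ie0Z'
    have h3 := condExp_sub (μ := μ) (m := mX) iδAZ' ip0δZ'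
    have hpe0 : μ[fun ω => e0 ω * (1 - Z ω) | mX] =ᵐ[μ] fun ω => e0 ω * π0 ω := by
      have := condExp_mul_of_stronglyMeasurable_left (μ := μ) he0m.stronglyMeasurable
        (show Integrable (e0 * fun ω => 1 - Z ω) μ from ie0Z') iZc
      filter_upwards [this, hπ0ae] with ω hω hω2
      simpa [hω2, Pi.mul_def] using hω
    have hpδ : μ[fun ω => δ ω * (A ω * (1 - Z ω)) | mX] =ᵐ[μ]
        fun ω => δ ω * (p0 ω * π0 ω) := by
      have := condExp_mul_of_stronglyMeasurable_left (μ := μ) hδm.stronglyMeasurable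
        (show Integrable (δ * fun ω => A ω * (1 - Z ω)) μ from iδAZ') iAZ'
      filter_upwards [this, hp0] with ω hω hω2
      simpa [hω2, Pi.mul_def] using hω
    have hpp0δ : μ[fun ω => p0 ω * δ ω * (1 - Z ω) | mX] =ᵐ[μ]
        fun ω => p0 ω * δ ω * π0 ω := by
      have := condExp_mul_of_stronglyMeasurable_left (μ := μ) (hp0m.mul hδm).stronglyMeasurable
        (show Integrable ((fun ω => p0 ω * δ ω) * fun ω => 1 - Z ω) μ from ip0δZ') iZc
      filter_upwards [this, hπ0ae] with ω hω hω2
      simpa [hω2, Pi.mul_def] using hω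
    rw [hdec]
    filter_upwards [h1, h2, h3, he0, hpe0, hpδ, hpp0δ] with ω h1 h2 h3 he0 hpe0 hpδ hpp0δ
    simp only [Pi.sub_apply, Pi.zero_apply] at *
    rw [h1, h2, h3, he0, hpe0, hpδ, hpp0δ]
    ring
  -- T is integrable
  have hRM : Measurable[m0] R := by
    rw [hRdef]
    exact ((hYM.mul (measurable_const.sub hAM)).sub he0M).sub ((hAM.sub hp0M).mul hδM)
  have hTM : Measurable[m0] T := by
    rw [hTdef]
    refine ((hρM.mul (Measurable.div ?_ ?_)).mul hΩM).mul hRM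
    · exact (measurable_const.mul hZM).sub measurable_const
    · exact (hZM.mul hπs1M).add ((measurable_const.sub hZM).mul hπs0M)
  have hUint : Integrable U μ := by
    have h := (hintAY.add iAδ).sub (iA.const_mul ψ)
    refine h.congr (ae_of_all _ fun ω => ?_)
    simp only [Pi.sub_apply, Pi.add_apply, hUdef]; ring
  have hTint : Integrable T μ := by
    have h := (hEIFint.const_mul c).sub hUint
    refine h.congr (ae_of_all _ fun ω => ?_)
    simp only [Pi.sub_apply, hEIF ω]
    field_simp
    ring
  have hTZint : Integrable (fun ω => T ω * Z ω) μ := by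
    refine Integrable.mono' hTint.abs ((hTM.mul hZM).aestronglyMeasurable)
      (ae_of_all _ fun ω => ?_)
    rw [Real.norm_eq_abs, abs_mul]
    calc |T ω| * |Z ω| ≤ |T ω| * 1 := mul_le_mul_of_nonneg_left (hZ1 ω) (abs_nonneg _)
      _ = |T ω| := mul_one _
  have hTZ'int : Integrable (fun ω => T ω * (1 - Z ω)) μ := by
    refine Integrable.mono' hTint.abs ((hTM.mul (measurable_const.sub hZM)).aestronglyMeasurable)
      (ae_of_all _ fun ω => ?_)
    rw [Real.norm_eq_abs, abs_mul]
    calc |T ω| * |1 - Z ω| ≤ |T ω| * 1 := mul_le_mul_of_nonneg_left (hZ1' ω) (abs_nonneg _)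
      _ = |T ω| := mul_one _
  -- the two products
  have hf1eq : (fun ω => ρstar ω * Ωstar ω / πstar1 ω * (Z ω * R ω)) = fun ω => T ω * Z ω := by
    funext ω
    have hne1 : πstar1 ω ≠ 0 := ne_of_gt (hπspos ω).2.1
    rcases hZ ω with h | h
    · simp only [hTdef, h]; ring
    · simp only [hTdef, h]
      norm_num
      field_simp
      simp
  have hf0eq : (fun ω => -(ρstar ω * Ωstar ω / πstar0 ω) * ((1 - Z ω) * R ω)) =
      fun ω => T ω * (1 - Z ω) := by
    funext ω
    have hne0 : πstar0 ω ≠ 0 := ne_of_gt (hπspos ω).1.1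
    rcases hZ ω with h | h
    · simp only [hTdef, h]
      norm_num
      field_simp
    · simp only [hTdef, h]; ring
  have hI1 : ∫ ω, ρstar ω * Ωstar ω / πstar1 ω * (Z ω * R ω) ∂μ = 0 := by
    refine keyZero hmX ((hρsm.mul hΩsm).div hπs1m) iZR ?_ hZR0
    rw [hf1eq]; exact hTZint
  have hI0 : ∫ ω, -(ρstar ω * Ωstar ω / πstar0 ω) * ((1 - Z ω) * R ω) ∂μ = 0 := by
    refine keyZero hmX ((hρsm.mul hΩsm).div hπs0m).neg iZR' ?_ hZ'R0
    rw [hf0eq]; exact hTZ'int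
  -- ∫ T = 0
  have hTzero : ∫ ω, T ω ∂μ = 0 := by
    have hTsplit : ∀ ω, T ω = ρstar ω * Ωstar ω / πstar1 ω * (Z ω * R ω) +
        -(ρstar ω * Ωstar ω / πstar0 ω) * ((1 - Z ω) * R ω) := by
      intro ω
      have := congrFun hf1eq ω
      have := congrFun hf0eq ω
      rcases hZ ω with h | h
      · rw [congrFun hf1eq ω, congrFun hf0eq ω, h]; ring
      · rw [congrFun hf1eq ω, congrFun hf0eq ω, h]; ring
    have hi1 : Integrable (fun ω => ρstar ω * Ωstar ω / πstar1 ω * (Z ω * R ω)) μ := by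
      rw [hf1eq]; exact hTZint
    have hi0 : Integrable (fun ω => -(ρstar ω * Ωstar ω / πstar0 ω) * ((1 - Z ω) * R ω)) μ := by
      rw [hf0eq]; exact hTZ'int
    rw [integral_congr_ae (ae_of_all μ hTsplit), integral_add hi1 hi0, hI1, hI0, add_zero]
  -- ∫ U = 0
  have hUzero : ∫ ω, U ω ∂μ = 0 := by
    have hiAYδ : Integrable (fun ω => A ω * (Y ω + δ ω)) μ := by
      refine (hintAY.add iAδ).congr (ae_of_all _ fun ω => ?_)
      simp only [Pi.add_apply]; ring
    have : ∫ ω, U ω ∂μ = (∫ ω, A ω * (Y ω + δ ω) ∂μ) - ∫ ω, ψ * A ω ∂μ := by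
      rw [← integral_sub hiAYδ (iA.const_mul ψ)]
      refine integral_congr_ae (ae_of_all _ fun ω => ?_)
      simp only [hUdef]; ring
    rw [this, integral_const_mul, ← hcdef, ← hψ]
    try ring
  -- conclude
  have hEIFeq : ∀ ω, EIF ω = (1 / c) * (U ω + T ω) := by
    intro ω
    rw [hEIF ω]
    try simp only [hUdef, hTdef, hRdef, hcdef]
  calc ∫ ω, EIF ω ∂μ = ∫ ω, (1 / c) * (U ω + T ω) ∂μ :=
      integral_congr_ae (ae_of_all _ hEIFeq)
    _ = (1 / c) * ∫ ω, (U ω + T ω) ∂μ := integral_const_mul _ _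
    _ = (1 / c) * ((∫ ω, U ω ∂μ) + ∫ ω, T ω ∂μ) := by rw [integral_add hUint hTint]
    _ = 0 := by rw [hUzero, hTzero]; ring
end

section
/- The efficient influence function EIF(O;ψ) is an unbiased estimating function when p_z(X) and π_z(X) for z ∈ {0,1} are evaluated at their true values, regardless of whether e₀(X), e₁(X), and δ(X) are misspecified: E[EIF(O; ψ, e₁*, e₀*, p₁, p₀, π_z, δ*)] = 0. -/
open MeasureTheory
open Filter

section Helpers
variable {α : Type*} {m0 : MeasurableSpace α} {μ : Measure α}

lemma int_of_bdd [IsFiniteMeasure μ] {f : α → ℝ} (hf : Measurable f)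
    {D : ℝ} (hb : ∀ ω, |f ω| ≤ D) : Integrable f μ :=
  (integrable_const D).mono' hf.aestronglyMeasurable (Eventually.of_forall fun ω => by
    simpa [Real.norm_eq_abs] using hb ω)

lemma condexp_bdd_mul {mX : MeasurableSpace α} (hmX : mX ≤ m0) [IsProbabilityMeasure μ]
    {u f k : α → ℝ} (hu : Measurable[mX] u) (hub : ∃ D, ∀ ω, |u ω| ≤ D)
    (hf : Integrable f μ) (hk : μ[f|mX] =ᵐ[μ] k) :
    μ[fun ω => u ω * f ω|mX] =ᵐ[μ] fun ω => u ω * k ω := by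
  obtain ⟨D, hD⟩ := hub
  have hint : Integrable (u * f) μ :=
    hf.bdd_mul (hu.mono hmX le_rfl).aestronglyMeasurable
      (c := D) (Eventually.of_forall fun ω => by simpa [Real.norm_eq_abs] using hD ω)
  have h := condExp_mul_of_stronglyMeasurable_left hu.stronglyMeasurable hint hf
  have h' : μ[fun ω => u ω * f ω|mX] =ᵐ[μ] u * μ[f|mX] := h
  refine h'.trans ?_
  filter_upwards [hk] with ω hω
  simp [hω]

lemma pull {mX : MeasurableSpace α} (hmX : mX ≤ m0) [IsProbabilityMeasure μ]
    {h f k : α → ℝ} (hh : Measurable[mX] h)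
    (hint : Integrable (fun ω => h ω * f ω) μ)
    (hf : Integrable f μ) (hk : μ[f|mX] =ᵐ[μ] k) :
    ∫ ω, h ω * f ω ∂μ = ∫ ω, h ω * k ω ∂μ := by
  have hint' : Integrable (h * f) μ := hint
  have hce := condExp_mul_of_stronglyMeasurable_left hh.stronglyMeasurable hint' hf
  have h1 : μ[fun ω => h ω * f ω|mX] =ᵐ[μ] fun ω => h ω * k ω := by
    refine EventuallyEq.trans (hce : μ[fun ω => h ω * f ω|mX] =ᵐ[μ] h * μ[f|mX]) ?_
    filter_upwards [hk] with ω hω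
    simp [hω]
  rw [← integral_condExp hmX (f := fun ω => h ω * f ω)]
  exact integral_congr_ae h1

end Helpers


/-- multiple robustness, model 𝓜₂: the efficient influence function
`EIF(O;ψ) = (1/pr(A=1))[A{Y + δ*(X) − ψ} + ρ(X)((2Z−1)/π_Z(X))Ω(X){Y(1−A) − e₀*(X) − (A−p₀*(X))δ*(X)}]`
is an unbiased estimating function when `p_z(X)` and `π_z(X)`, `z ∈ {0,1}`, are evaluated
at their true values (hence `ρ = p₁π₁+p₀π₀` and `Ω = 1/(p₁−p₀)` are true), regardless of
the (misspecified, arbitrary bounded `mX`-measurable) `e₀*`, `p₀*` and `δ*`: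
`E[EIF(O; ψ, e₁*, e₀*, p₁, p₀, π_z, δ*)] = 0`.

True nuisances are `mX`-measurable functions characterized by conditional expectation
identities (`mX` = σ-algebra of `X`); `ψ = E[Y|A=1] + E[Aδ(X)]/pr(A=1)` with the true
`δ = (e₁−e₀)/(p₁−p₀)` is encoded by `hψ`. -/
theorem eif_unbiased_M2
    (Ω : Type*) (mX : MeasurableSpace Ω) [m0 : MeasurableSpace Ω] (μ : Measure Ω) [IsProbabilityMeasure μ]
    (hmX : mX ≤ m0)
    (A Z Y : Ω → ℝ) (hAm : Measurable A) (hZm : Measurable Z) (hYm : Measurable Y)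
    (hA : ∀ ω, A ω = 0 ∨ A ω = 1) (hZ : ∀ ω, Z ω = 0 ∨ Z ω = 1)
    (p0 p1 π0 π1 e0 e1 : Ω → ℝ)
    (hp0m : Measurable[mX] p0) (hp1m : Measurable[mX] p1)
    (hπ0m : Measurable[mX] π0) (hπ1m : Measurable[mX] π1)
    (he0m : Measurable[mX] e0) (he1m : Measurable[mX] e1)
    (C : ℝ) (hbdd : ∀ ω, |p0 ω| ≤ C ∧ |p1 ω| ≤ C ∧ |e0 ω| ≤ C ∧ |e1 ω| ≤ C)
    (hπ1pos : ∀ ω, π1 ω ∈ Set.Ioo (0:ℝ) 1) (hπ01 : ∀ ω, π0 ω = 1 - π1 ω)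
    (ε : ℝ) (hε : 0 < ε) (hgap : ∀ ω, ε ≤ |p1 ω - p0 ω|)
    (hπ1 : μ[Z | mX] =ᵐ[μ] π1)
    (hp1 : μ[fun ω => A ω * Z ω | mX] =ᵐ[μ] fun ω => p1 ω * π1 ω)
    (hp0 : μ[fun ω => A ω * (1 - Z ω) | mX] =ᵐ[μ] fun ω => p0 ω * π0 ω)
    (he1 : μ[fun ω => Y ω * (1 - A ω) * Z ω | mX] =ᵐ[μ] fun ω => e1 ω * π1 ω)
    (he0 : μ[fun ω => Y ω * (1 - A ω) * (1 - Z ω) | mX] =ᵐ[μ] fun ω => e0 ω * π0 ω)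
    -- misspecified (arbitrary, bounded, mX-measurable) nuisance functions
    (e0star p0star δstar : Ω → ℝ)
    (he0sm : Measurable[mX] e0star) (hp0sm : Measurable[mX] p0star)
    (hδsm : Measurable[mX] δstar)
    (he0sb : ∀ ω, |e0star ω| ≤ C) (hp0sb : ∀ ω, |p0star ω| ≤ C)
    (hδsb : ∀ ω, |δstar ω| ≤ C)
    -- true δ, ψ and the EIF
    (δ : Ω → ℝ) (hδ : ∀ ω, δ ω = (e1 ω - e0 ω) / (p1 ω - p0 ω))
    (ψ : ℝ) (hPA : 0 < ∫ ω, A ω ∂μ)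
    (hψ : ψ * (∫ ω, A ω ∂μ) = ∫ ω, A ω * (Y ω + δ ω) ∂μ)
    (EIF : Ω → ℝ)
    (hEIF : ∀ ω, EIF ω = (1 / ∫ ω', A ω' ∂μ) *
      (A ω * (Y ω + δstar ω - ψ)
        + (p1 ω * π1 ω + p0 ω * π0 ω)
            * ((2 * Z ω - 1) / (Z ω * π1 ω + (1 - Z ω) * π0 ω))
            * (1 / (p1 ω - p0 ω))
            * (Y ω * (1 - A ω) - e0star ω - (A ω - p0star ω) * δstar ω)))
    (hintAY : Integrable (fun ω => A ω * Y ω) μ)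
    (hintY : Integrable (fun ω => Y ω * (1 - A ω)) μ)
    (hintYZ : Integrable (fun ω => Y ω * (1 - A ω) * Z ω) μ)
    (hEIFint : Integrable EIF μ) :
    ∫ ω, EIF ω ∂μ = 0 := by
  classical
  -- nonemptiness and basic bounds
  haveI hne : Nonempty Ω := by
    by_contra hempty
    rw [not_nonempty_iff] at hempty
    have h1 : μ Set.univ = 1 := measure_univ
    rw [Set.univ_eq_empty_iff.mpr hempty, measure_empty] at h1
    exact zero_ne_one h1
  obtain ⟨ω0⟩ := hne
  have hC0 : (0:ℝ) ≤ C := (abs_nonneg _).trans (hbdd ω0).1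
  set c : ℝ := ∫ ω, A ω ∂μ with hcdef
  have hc0 : c ≠ 0 := ne_of_gt hPA
  have hπ1p : ∀ ω, 0 < π1 ω := fun ω => (hπ1pos ω).1
  have hπ1lt : ∀ ω, π1 ω < 1 := fun ω => (hπ1pos ω).2
  have hπ0p : ∀ ω, 0 < π0 ω := fun ω => by rw [hπ01 ω]; linarith [hπ1lt ω]
  have hπ1b : ∀ ω, |π1 ω| ≤ 1 := fun ω =>
    abs_le.mpr ⟨by linarith [hπ1p ω], by linarith [hπ1lt ω]⟩
  have hπ0b : ∀ ω, |π0 ω| ≤ 1 := fun ω =>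
    abs_le.mpr ⟨by linarith [hπ0p ω], by rw [hπ01 ω]; linarith [hπ1p ω]⟩
  have hgap0 : ∀ ω, p1 ω - p0 ω ≠ 0 := fun ω => by
    intro h
    have h2 := hgap ω
    rw [h, abs_zero] at h2
    linarith
  have hAb : ∀ ω, |A ω| ≤ 1 := fun ω => by rcases hA ω with h | h <;> simp [h]
  have hZb : ∀ ω, |Z ω| ≤ 1 := fun ω => by rcases hZ ω with h | h <;> simp [h]
  have hZb' : ∀ ω, |1 - Z ω| ≤ 1 := fun ω => by rcases hZ ω with h | h <;> simp [h]
  -- m0-measurability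
  have hAm' : Measurable[m0] A := hAm
  have hZm' : Measurable[m0] Z := hZm
  have hYm' : Measurable[m0] Y := hYm
  have hp0m' := hp0m.mono hmX le_rfl
  have hp1m' := hp1m.mono hmX le_rfl
  have hπ0m' := hπ0m.mono hmX le_rfl
  have hπ1m' := hπ1m.mono hmX le_rfl
  have he0m' := he0m.mono hmX le_rfl
  have he1m' := he1m.mono hmX le_rfl
  have he0sm' := he0sm.mono hmX le_rfl
  have hp0sm' := hp0sm.mono hmX le_rfl
  have hδsm' := hδsm.mono hmX le_rfl
  -- true δ
  have hδm : Measurable[mX] δ := by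
    have h : δ = fun ω => (e1 ω - e0 ω) / (p1 ω - p0 ω) := funext hδ
    rw [h]; exact (he1m.sub he0m).div (hp1m.sub hp0m)
  have hδm' := hδm.mono hmX le_rfl
  have hδb : ∀ ω, |δ ω| ≤ 2 * C / ε := fun ω => by
    rw [hδ ω, abs_div]
    refine div_le_div₀ (by linarith) ?_ hε (hgap ω)
    calc |e1 ω - e0 ω| ≤ |e1 ω| + |e0 ω| := abs_sub _ _
      _ ≤ 2 * C := by linarith [(hbdd ω).2.2.2, (hbdd ω).2.2.1]
  -- abbreviations
  set ρ : Ω → ℝ := fun ω => p1 ω * π1 ω + p0 ω * π0 ω with hρdef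
  set S : Ω → ℝ := fun ω => Y ω * (1 - A ω) - e0star ω - (A ω - p0star ω) * δstar ω with hSdef
  set w : Ω → ℝ := fun ω => ρ ω * (1 / (p1 ω - p0 ω)) with hwdef
  set g1 : Ω → ℝ := fun ω => w ω / π1 ω with hg1def
  set g0 : Ω → ℝ := fun ω => w ω / π0 ω with hg0def
  set K1 : Ω → ℝ := fun ω => e1 ω - e0star ω - (p1 ω - p0star ω) * δstar ω with hK1def
  set K0 : Ω → ℝ := fun ω => e0 ω - e0star ω - (p0 ω - p0star ω) * δstar ω with hK0def
  set T1 : Ω → ℝ := fun ω => A ω * (Y ω + δstar ω - ψ) with hT1def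
  set F : Ω → ℝ := fun ω => T1 ω + g1 ω * (S ω * Z ω) - g0 ω * (S ω * (1 - Z ω)) with hFdef
  -- EIF = (1/c) * F pointwise
  have hFE : ∀ ω, EIF ω = (1 / c) * F ω := by
    intro ω
    rw [hEIF ω]
    have h1 : π1 ω ≠ 0 := (hπ1p ω).ne'
    have h0 : π0 ω ≠ 0 := (hπ0p ω).ne'
    have hg := hgap0 ω
    congr 1
    simp only [hFdef, hT1def, hg1def, hg0def, hwdef, hρdef, hSdef]
    rcases hZ ω with h | h <;> rw [h] <;> simp only [one_mul, sub_self, zero_mul, add_zero, zero_add, sub_zero, mul_one, mul_zero] <;> field_simp <;> ring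
  -- integrability of basic variables
  have hIntA : Integrable A μ := int_of_bdd hAm' hAb
  have hIntZ : Integrable Z μ := int_of_bdd hZm' hZb
  have hIntZ1 : Integrable (fun ω => 1 - Z ω) μ :=
    int_of_bdd (measurable_const.sub hZm') hZb'
  have hIntAZ : Integrable (fun ω => A ω * Z ω) μ :=
    hIntZ.bdd_mul hAm'.aestronglyMeasurable (c := 1) (Eventually.of_forall fun ω => by simpa [Real.norm_eq_abs] using hAb ω)
  have hIntAZ0 : Integrable (fun ω => A ω * (1 - Z ω)) μ :=
    hIntZ1.bdd_mul hAm'.aestronglyMeasurable (c := 1) (Eventually.of_forall fun ω => by simpa [Real.norm_eq_abs] using hAb ω)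
  have hIntY1AZ0 : Integrable (fun ω => Y ω * (1 - A ω) * (1 - Z ω)) μ :=
    (hintY.sub hintYZ).congr (Eventually.of_forall fun ω => by
      simp only [Pi.sub_apply]; ring)
  have hIntT1 : Integrable T1 μ := by
    have h2 : Integrable (fun ω => (δstar ω - ψ) * A ω) μ :=
      hIntA.bdd_mul (hδsm'.sub measurable_const).aestronglyMeasurable
        (c := C + |ψ|) (Eventually.of_forall fun ω => by
          rw [Real.norm_eq_abs]
          calc |δstar ω - ψ| ≤ |δstar ω| + |ψ| := abs_sub _ _
            _ ≤ C + |ψ| := by linarith [hδsb ω])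
    exact (hintAY.add h2).congr (Eventually.of_forall fun ω => by
      simp only [Pi.add_apply, hT1def]; ring)
  have hIntF : Integrable F μ := by
    refine (hEIFint.const_mul c).congr (Eventually.of_forall fun ω => ?_)
    show c * EIF ω = F ω
    rw [hFE ω]
    field_simp
  have hIntT2 : Integrable (fun ω => F ω - T1 ω) μ := hIntF.sub hIntT1
  have hG1eq : ∀ ω, Z ω * (F ω - T1 ω) = g1 ω * (S ω * Z ω) := fun ω => by
    rcases hZ ω with h | h <;> simp only [hFdef] <;> rw [h] <;> ring
  have hG0eq : ∀ ω, (1 - Z ω) * (T1 ω - F ω) = g0 ω * (S ω * (1 - Z ω)) := fun ω => by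
    rcases hZ ω with h | h <;> simp only [hFdef] <;> rw [h] <;> ring
  have hIntG1 : Integrable (fun ω => g1 ω * (S ω * Z ω)) μ := by
    have h := hIntT2.bdd_mul hZm'.aestronglyMeasurable
      (c := 1) (Eventually.of_forall fun ω => by simpa [Real.norm_eq_abs] using hZb ω)
    exact h.congr (Eventually.of_forall hG1eq)
  have hIntG0 : Integrable (fun ω => g0 ω * (S ω * (1 - Z ω))) μ := by
    have h := (hIntT1.sub hIntF).bdd_mul (measurable_const.sub hZm').aestronglyMeasurable
      (c := 1) (Eventually.of_forall fun ω => by simpa [Real.norm_eq_abs] using hZb' ω)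
    exact h.congr (Eventually.of_forall hG0eq)
  -- integrability of the inner pieces
  have hBb : ∀ ω, |(-(e0star ω) - (A ω - p0star ω) * δstar ω)| ≤ C + (1 + C) * C := by
    intro ω
    have h1 : |A ω - p0star ω| ≤ 1 + C :=
      (abs_sub _ _).trans (by linarith [hAb ω, hp0sb ω])
    have h2 : |(A ω - p0star ω) * δstar ω| ≤ (1 + C) * C := by
      rw [abs_mul]; exact mul_le_mul h1 (hδsb ω) (abs_nonneg _) (by linarith)
    calc |(-(e0star ω) - (A ω - p0star ω) * δstar ω)|
        ≤ |(-(e0star ω))| + |(A ω - p0star ω) * δstar ω| := abs_sub _ _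
      _ ≤ C + (1 + C) * C := by rw [abs_neg]; linarith [he0sb ω]
  have hBm : Measurable[m0] (fun ω => -(e0star ω) - (A ω - p0star ω) * δstar ω) :=
    (he0sm'.neg).sub ((hAm'.sub hp0sm').mul hδsm')
  have hIntSZ : Integrable (fun ω => S ω * Z ω) μ := by
    have hB : Integrable (fun ω => (-(e0star ω) - (A ω - p0star ω) * δstar ω) * Z ω) μ :=
      hIntZ.bdd_mul hBm.aestronglyMeasurable
        (c := C + (1 + C) * C) (Eventually.of_forall fun ω => by simpa [Real.norm_eq_abs] using hBb ω)
    exact (hintYZ.add hB).congr (Eventually.of_forall fun ω => by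
      simp only [Pi.add_apply, hSdef]; ring)
  have hIntSZ0 : Integrable (fun ω => S ω * (1 - Z ω)) μ := by
    have hB : Integrable (fun ω => (-(e0star ω) - (A ω - p0star ω) * δstar ω) * (1 - Z ω)) μ :=
      hIntZ1.bdd_mul hBm.aestronglyMeasurable
        (c := C + (1 + C) * C) (Eventually.of_forall fun ω => by simpa [Real.norm_eq_abs] using hBb ω)
    exact (hIntY1AZ0.add hB).congr (Eventually.of_forall fun ω => by
      simp only [Pi.add_apply, hSdef]; ring)
  have i2 : Integrable (fun ω => e0star ω * Z ω) μ :=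
    hIntZ.bdd_mul he0sm'.aestronglyMeasurable
      (c := C) (Eventually.of_forall fun ω => by simpa [Real.norm_eq_abs] using he0sb ω)
  have i3 : Integrable (fun ω => δstar ω * (A ω * Z ω)) μ :=
    hIntAZ.bdd_mul hδsm'.aestronglyMeasurable
      (c := C) (Eventually.of_forall fun ω => by simpa [Real.norm_eq_abs] using hδsb ω)
  have i4 : Integrable (fun ω => (p0star ω * δstar ω) * Z ω) μ :=
    hIntZ.bdd_mul (hp0sm'.mul hδsm').aestronglyMeasurable
      (c := C * C) (Eventually.of_forall fun ω => by
        rw [Real.norm_eq_abs, abs_mul]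
        exact mul_le_mul (hp0sb ω) (hδsb ω) (abs_nonneg _) hC0)
  have i2' : Integrable (fun ω => e0star ω * (1 - Z ω)) μ :=
    hIntZ1.bdd_mul he0sm'.aestronglyMeasurable
      (c := C) (Eventually.of_forall fun ω => by simpa [Real.norm_eq_abs] using he0sb ω)
  have i3' : Integrable (fun ω => δstar ω * (A ω * (1 - Z ω))) μ :=
    hIntAZ0.bdd_mul hδsm'.aestronglyMeasurable
      (c := C) (Eventually.of_forall fun ω => by simpa [Real.norm_eq_abs] using hδsb ω)
  have i4' : Integrable (fun ω => (p0star ω * δstar ω) * (1 - Z ω)) μ :=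
    hIntZ1.bdd_mul (hp0sm'.mul hδsm').aestronglyMeasurable
      (c := C * C) (Eventually.of_forall fun ω => by
        rw [Real.norm_eq_abs, abs_mul]
        exact mul_le_mul (hp0sb ω) (hδsb ω) (abs_nonneg _) hC0)
  -- conditional expectation facts
  have hπ0ce : μ[fun ω => 1 - Z ω|mX] =ᵐ[μ] π0 := by
    have h1 : μ[fun ω => (1:ℝ) - Z ω|mX] =ᵐ[μ] μ[fun _ => (1:ℝ)|mX] - μ[Z|mX] :=
      condExp_sub (integrable_const (1:ℝ)) hIntZ mX
    refine h1.trans ?_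
    have hcst := condExp_const hmX (1:ℝ) (μ := μ)
    filter_upwards [hπ1] with ω hω
    simp [hcst, hω, hπ01 ω]
  have hEA : μ[A|mX] =ᵐ[μ] ρ := by
    have hsplit : A = fun ω => A ω * Z ω + A ω * (1 - Z ω) := funext fun ω => by ring
    have h1 : μ[A|mX] = μ[fun ω => A ω * Z ω + A ω * (1 - Z ω)|mX] := by rw [← hsplit]
    rw [h1]
    have h2 : μ[fun ω => A ω * Z ω + A ω * (1 - Z ω)|mX] =ᵐ[μ]
        μ[fun ω => A ω * Z ω|mX] + μ[fun ω => A ω * (1 - Z ω)|mX] :=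
      condExp_add hIntAZ hIntAZ0 mX
    refine h2.trans ?_
    filter_upwards [hp1, hp0] with ω h3 h4
    simp only [Pi.add_apply, h3, h4, hρdef]
  have d2 := condexp_bdd_mul hmX he0sm ⟨C, he0sb⟩ hIntZ hπ1
  have d3 := condexp_bdd_mul hmX hδsm ⟨C, hδsb⟩ hIntAZ hp1
  have d4 := condexp_bdd_mul hmX (u := fun ω => p0star ω * δstar ω) (hp0sm.mul hδsm)
    ⟨C * C, fun ω => by
      rw [abs_mul]; exact mul_le_mul (hp0sb ω) (hδsb ω) (abs_nonneg _) hC0⟩ hIntZ hπ1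
  have d2' := condexp_bdd_mul hmX he0sm ⟨C, he0sb⟩ hIntZ1 hπ0ce
  have d3' := condexp_bdd_mul hmX hδsm ⟨C, hδsb⟩ hIntAZ0 hp0
  have d4' := condexp_bdd_mul hmX (u := fun ω => p0star ω * δstar ω) (hp0sm.mul hδsm)
    ⟨C * C, fun ω => by
      rw [abs_mul]; exact mul_le_mul (hp0sb ω) (hδsb ω) (abs_nonneg _) hC0⟩ hIntZ1 hπ0ce
  have hceSZ : μ[fun ω => S ω * Z ω|mX] =ᵐ[μ] fun ω => π1 ω * K1 ω := by
    have hrw : (fun ω => S ω * Z ω) = fun ω =>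
        (Y ω * (1 - A ω) * Z ω - e0star ω * Z ω) -
          (δstar ω * (A ω * Z ω) - (p0star ω * δstar ω) * Z ω) := by
      funext ω; simp only [hSdef]; ring
    rw [hrw]
    have ha : μ[fun ω => Y ω * (1 - A ω) * Z ω - e0star ω * Z ω|mX] =ᵐ[μ]
        μ[fun ω => Y ω * (1 - A ω) * Z ω|mX] - μ[fun ω => e0star ω * Z ω|mX] :=
      condExp_sub hintYZ i2 mX
    have hb : μ[fun ω => δstar ω * (A ω * Z ω) - (p0star ω * δstar ω) * Z ω|mX] =ᵐ[μ]
        μ[fun ω => δstar ω * (A ω * Z ω)|mX] - μ[fun ω => (p0star ω * δstar ω) * Z ω|mX] :=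
      condExp_sub i3 i4 mX
    have h0 : μ[fun ω =>
        (Y ω * (1 - A ω) * Z ω - e0star ω * Z ω) -
          (δstar ω * (A ω * Z ω) - (p0star ω * δstar ω) * Z ω)|mX] =ᵐ[μ]
        μ[fun ω => Y ω * (1 - A ω) * Z ω - e0star ω * Z ω|mX] -
          μ[fun ω => δstar ω * (A ω * Z ω) - (p0star ω * δstar ω) * Z ω|mX] :=
      condExp_sub (hintYZ.sub i2) (i3.sub i4) mX
    refine h0.trans ?_
    filter_upwards [ha, hb, he1, d2, d3, d4] with ω ea eb f1 f2 f3 f4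
    simp only [Pi.sub_apply] at ea eb ⊢
    rw [ea, eb, f1, f2, f3, f4]
    simp only [hK1def]
    ring
  have hceSZ0 : μ[fun ω => S ω * (1 - Z ω)|mX] =ᵐ[μ] fun ω => π0 ω * K0 ω := by
    have hrw : (fun ω => S ω * (1 - Z ω)) = fun ω =>
        (Y ω * (1 - A ω) * (1 - Z ω) - e0star ω * (1 - Z ω)) -
          (δstar ω * (A ω * (1 - Z ω)) - (p0star ω * δstar ω) * (1 - Z ω)) := by
      funext ω; simp only [hSdef]; ring
    rw [hrw]
    have ha : μ[fun ω => Y ω * (1 - A ω) * (1 - Z ω) - e0star ω * (1 - Z ω)|mX] =ᵐ[μ]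
        μ[fun ω => Y ω * (1 - A ω) * (1 - Z ω)|mX] - μ[fun ω => e0star ω * (1 - Z ω)|mX] :=
      condExp_sub hIntY1AZ0 i2' mX
    have hb : μ[fun ω => δstar ω * (A ω * (1 - Z ω)) - (p0star ω * δstar ω) * (1 - Z ω)|mX] =ᵐ[μ]
        μ[fun ω => δstar ω * (A ω * (1 - Z ω))|mX] -
          μ[fun ω => (p0star ω * δstar ω) * (1 - Z ω)|mX] :=
      condExp_sub i3' i4' mX
    have h0 : μ[fun ω =>
        (Y ω * (1 - A ω) * (1 - Z ω) - e0star ω * (1 - Z ω)) -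
          (δstar ω * (A ω * (1 - Z ω)) - (p0star ω * δstar ω) * (1 - Z ω))|mX] =ᵐ[μ]
        μ[fun ω => Y ω * (1 - A ω) * (1 - Z ω) - e0star ω * (1 - Z ω)|mX] -
          μ[fun ω => δstar ω * (A ω * (1 - Z ω)) - (p0star ω * δstar ω) * (1 - Z ω)|mX] :=
      condExp_sub (hIntY1AZ0.sub i2') (i3'.sub i4') mX
    refine h0.trans ?_
    filter_upwards [ha, hb, he0, d2', d3', d4'] with ω ea eb f1 f2 f3 f4
    simp only [Pi.sub_apply] at ea eb ⊢
    rw [ea, eb, f1, f2, f3, f4]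
    simp only [hK0def]
    ring
  -- measurability of g1 g0 (mX)
  have hρmX : Measurable[mX] ρ := by
    rw [hρdef]; exact (hp1m.mul hπ1m).add (hp0m.mul hπ0m)
  have hwmX : Measurable[mX] w := by
    rw [hwdef]; exact hρmX.mul (measurable_const.div (hp1m.sub hp0m))
  have hg1mX : Measurable[mX] g1 := by rw [hg1def]; exact hwmX.div hπ1m
  have hg0mX : Measurable[mX] g0 := by rw [hg0def]; exact hwmX.div hπ0m
  -- main integral computations
  have hIG1 : ∫ ω, g1 ω * (S ω * Z ω) ∂μ = ∫ ω, w ω * K1 ω ∂μ := by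
    rw [pull hmX hg1mX hIntG1 hIntSZ hceSZ]
    refine integral_congr_ae (Eventually.of_forall fun ω => ?_)
    have h1 : π1 ω ≠ 0 := (hπ1p ω).ne'
    simp only [hg1def]
    field_simp
  have hIG0 : ∫ ω, g0 ω * (S ω * (1 - Z ω)) ∂μ = ∫ ω, w ω * K0 ω ∂μ := by
    rw [pull hmX hg0mX hIntG0 hIntSZ0 hceSZ0]
    refine integral_congr_ae (Eventually.of_forall fun ω => ?_)
    have h0 : π0 ω ≠ 0 := (hπ0p ω).ne'
    simp only [hg0def]
    field_simp
  have iδsA : Integrable (fun ω => δstar ω * A ω) μ :=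
    hIntA.bdd_mul hδsm'.aestronglyMeasurable
      (c := C) (Eventually.of_forall fun ω => by simpa [Real.norm_eq_abs] using hδsb ω)
  have hIT1 : ∫ ω, T1 ω ∂μ
      = (∫ ω, A ω * Y ω ∂μ) + (∫ ω, δstar ω * ρ ω ∂μ) - ψ * c := by
    have hsp : T1 = fun ω => A ω * Y ω + δstar ω * A ω - ψ * A ω :=
      funext fun ω => by simp only [hT1def]; ring
    have iT1a : Integrable (fun ω => A ω * Y ω + δstar ω * A ω) μ := hintAY.add iδsA
    have iT1b : Integrable (fun ω => ψ * A ω) μ := hIntA.const_mul ψ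
    rw [hsp, integral_sub iT1a iT1b, integral_add hintAY iδsA, integral_const_mul,
      pull hmX hδsm iδsA hIntA hEA, ← hcdef]
  have iδA : Integrable (fun ω => δ ω * A ω) μ :=
    hIntA.bdd_mul hδm'.aestronglyMeasurable
      (c := 2 * C / ε) (Eventually.of_forall fun ω => by simpa [Real.norm_eq_abs] using hδb ω)
  have hψ' : ψ * c = (∫ ω, A ω * Y ω ∂μ) + ∫ ω, δ ω * ρ ω ∂μ := by
    rw [hψ]
    have h : (fun ω => A ω * (Y ω + δ ω)) = fun ω => A ω * Y ω + δ ω * A ω :=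
      funext fun ω => by ring
    rw [h, integral_add hintAY iδA, pull hmX hδm iδA hIntA hEA]
  -- bounded mX-measurable integrands
  have hρb : ∀ ω, |ρ ω| ≤ 2 * C := fun ω => by
    simp only [hρdef]
    calc |p1 ω * π1 ω + p0 ω * π0 ω| ≤ |p1 ω * π1 ω| + |p0 ω * π0 ω| := abs_add_le _ _
      _ ≤ C * 1 + C * 1 := by
          rw [abs_mul, abs_mul]
          exact add_le_add (mul_le_mul (hbdd ω).2.1 (hπ1b ω) (abs_nonneg _) hC0)
            (mul_le_mul (hbdd ω).1 (hπ0b ω) (abs_nonneg _) hC0)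
      _ = 2 * C := by ring
  have hwb : ∀ ω, |w ω| ≤ 2 * C / ε := fun ω => by
    simp only [hwdef]
    rw [abs_mul]
    have h1 : |1 / (p1 ω - p0 ω)| ≤ 1 / ε := by
      rw [abs_div, abs_one]
      exact one_div_le_one_div_of_le hε (hgap ω)
    calc |ρ ω| * |1 / (p1 ω - p0 ω)| ≤ 2 * C * (1 / ε) :=
        mul_le_mul (hρb ω) h1 (abs_nonneg _) (by linarith)
      _ = 2 * C / ε := by ring
  have hK1b : ∀ ω, |K1 ω| ≤ 2 * C + 2 * C * C := fun ω => by
    simp only [hK1def]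
    have h1 : |p1 ω - p0star ω| ≤ 2 * C :=
      (abs_sub _ _).trans (by linarith [(hbdd ω).2.1, hp0sb ω])
    have h2 : |(p1 ω - p0star ω) * δstar ω| ≤ 2 * C * C := by
      rw [abs_mul]; exact mul_le_mul h1 (hδsb ω) (abs_nonneg _) (by linarith)
    calc |e1 ω - e0star ω - (p1 ω - p0star ω) * δstar ω|
        ≤ |e1 ω - e0star ω| + |(p1 ω - p0star ω) * δstar ω| := abs_sub _ _
      _ ≤ 2 * C + 2 * C * C := by
          have := (abs_sub (e1 ω) (e0star ω)).trans
            (by linarith [(hbdd ω).2.2.2, he0sb ω] : |e1 ω| + |e0star ω| ≤ 2 * C)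
          linarith
  have hK0b : ∀ ω, |K0 ω| ≤ 2 * C + 2 * C * C := fun ω => by
    simp only [hK0def]
    have h1 : |p0 ω - p0star ω| ≤ 2 * C :=
      (abs_sub _ _).trans (by linarith [(hbdd ω).1, hp0sb ω])
    have h2 : |(p0 ω - p0star ω) * δstar ω| ≤ 2 * C * C := by
      rw [abs_mul]; exact mul_le_mul h1 (hδsb ω) (abs_nonneg _) (by linarith)
    calc |e0 ω - e0star ω - (p0 ω - p0star ω) * δstar ω|
        ≤ |e0 ω - e0star ω| + |(p0 ω - p0star ω) * δstar ω| := abs_sub _ _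
      _ ≤ 2 * C + 2 * C * C := by
          have := (abs_sub (e0 ω) (e0star ω)).trans
            (by linarith [(hbdd ω).2.2.1, he0sb ω] : |e0 ω| + |e0star ω| ≤ 2 * C)
          linarith
  have hwm' : Measurable[m0] w := hwmX.mono hmX le_rfl
  have hρm' : Measurable[m0] ρ := hρmX.mono hmX le_rfl
  have hK1m' : Measurable[m0] K1 := by
    rw [hK1def]
    exact (he1m'.sub he0sm').sub ((hp1m'.sub hp0sm').mul hδsm')
  have hK0m' : Measurable[m0] K0 := by
    rw [hK0def]
    exact (he0m'.sub he0sm').sub ((hp0m'.sub hp0sm').mul hδsm')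
  have hwε : (0:ℝ) ≤ 2 * C / ε := div_nonneg (by linarith) hε.le
  have iwK1 : Integrable (fun ω => w ω * K1 ω) μ :=
    int_of_bdd (hwm'.mul hK1m')
      (D := (2 * C / ε) * (2 * C + 2 * C * C))
      (fun ω => by
        rw [abs_mul]
        exact mul_le_mul (hwb ω) (hK1b ω) (abs_nonneg _) hwε)
  have iwK0 : Integrable (fun ω => w ω * K0 ω) μ :=
    int_of_bdd (hwm'.mul hK0m')
      (D := (2 * C / ε) * (2 * C + 2 * C * C))
      (fun ω => by
        rw [abs_mul]
        exact mul_le_mul (hwb ω) (hK0b ω) (abs_nonneg _) hwε)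
  have iδρ : Integrable (fun ω => δ ω * ρ ω) μ :=
    int_of_bdd (hδm'.mul hρm')
      (D := (2 * C / ε) * (2 * C))
      (fun ω => by
        rw [abs_mul]
        exact mul_le_mul (hδb ω) (hρb ω) (abs_nonneg _) hwε)
  have iδsρ : Integrable (fun ω => δstar ω * ρ ω) μ :=
    int_of_bdd (hδsm'.mul hρm')
      (D := C * (2 * C))
      (fun ω => by
        rw [abs_mul]
        exact mul_le_mul (hδsb ω) (hρb ω) (abs_nonneg _) hC0)
  have key : (∫ ω, w ω * K1 ω ∂μ) - ∫ ω, w ω * K0 ω ∂μ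
      = (∫ ω, δ ω * ρ ω ∂μ) - ∫ ω, δstar ω * ρ ω ∂μ := by
    rw [← integral_sub iwK1 iwK0, ← integral_sub iδρ iδsρ]
    refine integral_congr_ae (Eventually.of_forall fun ω => ?_)
    have hg := hgap0 ω
    simp only [hwdef, hρdef, hK1def, hK0def, hδ ω]
    field_simp
    ring
  have hF0 : ∫ ω, F ω ∂μ = 0 := by
    have hsplit : ∫ ω, F ω ∂μ = (∫ ω, T1 ω ∂μ) + (∫ ω, g1 ω * (S ω * Z ω) ∂μ)
        - ∫ ω, g0 ω * (S ω * (1 - Z ω)) ∂μ := by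
      simp only [hFdef]
      have iT1G1 : Integrable (fun ω => T1 ω + g1 ω * (S ω * Z ω)) μ := hIntT1.add hIntG1
      rw [integral_sub iT1G1 hIntG0, integral_add hIntT1 hIntG1]
    rw [hsplit, hIT1, hIG1, hIG0]
    linarith [key, hψ']
  calc ∫ ω, EIF ω ∂μ = ∫ ω, (1 / c) * F ω ∂μ :=
        integral_congr_ae (Eventually.of_forall fun ω => hFE ω)
    _ = (1 / c) * ∫ ω, F ω ∂μ := integral_const_mul _ _
    _ = 0 := by rw [hF0, mul_zero]
end

section
/- The efficient influence function EIF(O;ψ) is an unbiased estimating function when δ(X) and π_z(X) for z ∈ {0,1} are evaluated at their true values, regardless of whether p₀(X), p₁(X), e₀(X), e₁(X) are misspecified: E[EIF(O; ψ, e₁*, e₀*, p₁*, p₀*, π_z, δ)] = 0. -/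
open MeasureTheory


private lemma int_bdd {α : Type*} {m : MeasurableSpace α} {μ : Measure α} [IsFiniteMeasure μ]
    {f : α → ℝ} (hf : AEStronglyMeasurable f μ) {D : ℝ} (hD : ∀ ω, |f ω| ≤ D) :
    Integrable f μ :=
  (integrable_const D).mono' hf (Filter.Eventually.of_forall fun ω => by
    simpa [Real.norm_eq_abs] using hD ω)

set_option maxHeartbeats 2000000

private lemma abs_mul_le' {a b Da Db : ℝ} (ha : |a| ≤ Da) (hb : |b| ≤ Db) : |a * b| ≤ Da * Db := by
  rw [abs_mul]
  exact mul_le_mul ha hb (abs_nonneg _) (le_trans (abs_nonneg _) ha)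

/-- multiple robustness, model 𝓜₃: the efficient influence function
`EIF = (1/pr(A=1))[A{Y+δ(X)−ψ} + ρ*(X)((2Z−1)/π_Z(X))Ω(X){Y(1−A) − e₀*(X) − (A−p₀*(X))δ(X)}]`
is an unbiased estimating function when `δ(X)` and `π_z(X)`, `z ∈ {0,1}`, are evaluated at
their true values (and `Ω = 1/(p₁−p₀)` at truth), regardless of the (misspecified,
arbitrary bounded `mX`-measurable) `p₀*`, `p₁*` (through `ρ* = p₁*π₁ + p₀*π₀`) and
`e₀*`, `e₁*`: `E[EIF(O; ψ, e₁*, e₀*, p₁*, p₀*, π_z, δ)] = 0`.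

True nuisances are `mX`-measurable functions characterized by conditional expectation
identities (`mX` = σ-algebra of `X`); `ψ = E[Y|A=1] + E[Aδ(X)]/pr(A=1)` with the true
`δ = (e₁−e₀)/(p₁−p₀)` is encoded by `hψ`. -/
theorem eif_unbiased_M3
    (Ω : Type*) (mX : MeasurableSpace Ω) [m0 : MeasurableSpace Ω] (μ : Measure Ω) [IsProbabilityMeasure μ]
    (hmX : mX ≤ m0)
    (A Z Y : Ω → ℝ) (hAm : Measurable A) (hZm : Measurable Z) (hYm : Measurable Y)
    (hA : ∀ ω, A ω = 0 ∨ A ω = 1) (hZ : ∀ ω, Z ω = 0 ∨ Z ω = 1)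
    (p0 p1 π0 π1 e0 e1 : Ω → ℝ)
    (hp0m : Measurable[mX] p0) (hp1m : Measurable[mX] p1)
    (hπ0m : Measurable[mX] π0) (hπ1m : Measurable[mX] π1)
    (he0m : Measurable[mX] e0) (he1m : Measurable[mX] e1)
    (C : ℝ) (hbdd : ∀ ω, |p0 ω| ≤ C ∧ |p1 ω| ≤ C ∧ |e0 ω| ≤ C ∧ |e1 ω| ≤ C)
    (hπ1pos : ∀ ω, π1 ω ∈ Set.Ioo (0:ℝ) 1) (hπ01 : ∀ ω, π0 ω = 1 - π1 ω)
    (ε : ℝ) (hε : 0 < ε) (hgap : ∀ ω, ε ≤ |p1 ω - p0 ω|)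
    (hπ1 : μ[Z | mX] =ᵐ[μ] π1)
    (hp1 : μ[fun ω => A ω * Z ω | mX] =ᵐ[μ] fun ω => p1 ω * π1 ω)
    (hp0 : μ[fun ω => A ω * (1 - Z ω) | mX] =ᵐ[μ] fun ω => p0 ω * π0 ω)
    (he1 : μ[fun ω => Y ω * (1 - A ω) * Z ω | mX] =ᵐ[μ] fun ω => e1 ω * π1 ω)
    (he0 : μ[fun ω => Y ω * (1 - A ω) * (1 - Z ω) | mX] =ᵐ[μ] fun ω => e0 ω * π0 ω)
    -- misspecified (arbitrary, bounded, mX-measurable) nuisance functions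
    (e0star e1star p0star p1star : Ω → ℝ)
    (he0sm : Measurable[mX] e0star) (he1sm : Measurable[mX] e1star)
    (hp0sm : Measurable[mX] p0star) (hp1sm : Measurable[mX] p1star)
    (he0sb : ∀ ω, |e0star ω| ≤ C) (he1sb : ∀ ω, |e1star ω| ≤ C)
    (hp0sb : ∀ ω, |p0star ω| ≤ C) (hp1sb : ∀ ω, |p1star ω| ≤ C)
    -- true δ, ψ and the EIF
    (δ : Ω → ℝ) (hδ : ∀ ω, δ ω = (e1 ω - e0 ω) / (p1 ω - p0 ω))
    (ψ : ℝ) (hPA : 0 < ∫ ω, A ω ∂μ)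
    (hψ : ψ * (∫ ω, A ω ∂μ) = ∫ ω, A ω * (Y ω + δ ω) ∂μ)
    (EIF : Ω → ℝ)
    (hEIF : ∀ ω, EIF ω = (1 / ∫ ω', A ω' ∂μ) *
      (A ω * (Y ω + δ ω - ψ)
        + (p1star ω * π1 ω + p0star ω * π0 ω)
            * ((2 * Z ω - 1) / (Z ω * π1 ω + (1 - Z ω) * π0 ω))
            * (1 / (p1 ω - p0 ω))
            * (Y ω * (1 - A ω) - e0star ω - (A ω - p0star ω) * δ ω)))
    (hintAY : Integrable (fun ω => A ω * Y ω) μ)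
    (hintY : Integrable (fun ω => Y ω * (1 - A ω)) μ)
    (hintYZ : Integrable (fun ω => Y ω * (1 - A ω) * Z ω) μ)
    (hEIFint : Integrable EIF μ) :
    ∫ ω, EIF ω ∂μ = 0 := by
  classical
  -- nonemptiness and positivity facts
  have hcne : (∫ ω, A ω ∂μ) ≠ 0 := ne_of_gt hPA
  set c : ℝ := ∫ ω, A ω ∂μ with hc
  have hne : Nonempty Ω := by
    by_contra h
    rw [not_nonempty_iff] at h
    rw [hc, μ.eq_zero_of_isEmpty, integral_zero_measure] at hPA
    exact lt_irrefl 0 hPA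
  have hC0 : 0 ≤ C := le_trans (abs_nonneg _) (hbdd (Classical.arbitrary Ω)).1
  have hπ1ne : ∀ ω, π1 ω ≠ 0 := fun ω => ne_of_gt (hπ1pos ω).1
  have hπ0pos : ∀ ω, 0 < π0 ω := fun ω => by rw [hπ01 ω]; linarith [(hπ1pos ω).2]
  have hπ0ne : ∀ ω, π0 ω ≠ 0 := fun ω => ne_of_gt (hπ0pos ω)
  have hgapne : ∀ ω, p1 ω - p0 ω ≠ 0 := by
    intro ω h
    have h2 := hgap ω
    rw [h, abs_zero] at h2
    linarith
  have hAm' : @Measurable Ω ℝ m0 _ A := hAm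
  have hZm' : @Measurable Ω ℝ m0 _ Z := hZm
  have bA : ∀ ω, |A ω| ≤ 1 := by
    intro ω; rcases hA ω with h | h <;> rw [h] <;> norm_num
  have bZ : ∀ ω, |Z ω| ≤ 1 := by
    intro ω; rcases hZ ω with h | h <;> rw [h] <;> norm_num
  have b1Z : ∀ ω, |1 - Z ω| ≤ 1 := by
    intro ω; rcases hZ ω with h | h <;> rw [h] <;> norm_num
  -- δ : measurable and bounded
  set K : ℝ := 2 * C / ε with hK
  have hK0 : 0 ≤ K := by positivity
  have hδfun : δ = fun ω => (e1 ω - e0 ω) / (p1 ω - p0 ω) := funext hδ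
  have hδm : Measurable[mX] δ := by
    rw [hδfun]; exact (he1m.sub he0m).div (hp1m.sub hp0m)
  have hδb : ∀ ω, |δ ω| ≤ K := by
    intro ω
    rw [hδ ω, abs_div, hK]
    have h1 : |e1 ω - e0 ω| ≤ 2 * C := by
      have h2 := (hbdd ω).2.2.1
      have h3 := (hbdd ω).2.2.2
      calc |e1 ω - e0 ω| ≤ |e1 ω| + |e0 ω| := abs_sub _ _
        _ ≤ 2 * C := by linarith
    exact div_le_div₀ (by positivity) h1 hε (hgap ω)
  have hδm0 : @Measurable Ω ℝ m0 _ δ := hδm.mono hmX le_rfl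
  -- abbreviations
  set Om : Ω → ℝ := fun ω => 1 / (p1 ω - p0 ω) with hOmdef
  set ρs : Ω → ℝ := fun ω => p1star ω * π1 ω + p0star ω * π0 ω with hρsdef
  set V : Ω → ℝ := fun ω => Y ω * (1 - A ω) - e0star ω - (A ω - p0star ω) * δ ω with hVdef
  set q : Ω → ℝ := fun ω => -e0star ω + p0star ω * δ ω with hqdef
  set f1 : Ω → ℝ := fun ω => ρs ω * Om ω / π1 ω with hf1def
  set f2 : Ω → ℝ := fun ω => -(ρs ω * Om ω / π0 ω) with hf2def
  set G1 : Ω → ℝ := fun ω => Z ω * V ω with hG1def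
  set G2 : Ω → ℝ := fun ω => (1 - Z ω) * V ω with hG2def
  set T1 : Ω → ℝ := fun ω => A ω * (Y ω + δ ω - ψ) with hT1def
  set T2 : Ω → ℝ := fun ω => c * EIF ω - T1 ω with hT2def
  -- measurability
  have hOmm : Measurable[mX] Om := by
    rw [hOmdef]; exact measurable_const.div (hp1m.sub hp0m)
  have hρsm : Measurable[mX] ρs := by
    rw [hρsdef]; exact (hp1sm.mul hπ1m).add (hp0sm.mul hπ0m)
  have hqm : Measurable[mX] q := by
    rw [hqdef]; exact he0sm.neg.add (hp0sm.mul hδm)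
  have hf1sm : StronglyMeasurable[mX] f1 := by
    rw [hf1def]; exact (((hρsm.mul hOmm).div hπ1m)).stronglyMeasurable
  have hf2sm : StronglyMeasurable[mX] f2 := by
    rw [hf2def]; exact (((hρsm.mul hOmm).div hπ0m)).neg.stronglyMeasurable
  have hqm0 : @Measurable Ω ℝ m0 _ q := hqm.mono hmX le_rfl
  -- bounds
  have hqb : ∀ ω, |q ω| ≤ C + C * K := by
    intro ω
    rw [hqdef]
    calc |(-e0star ω + p0star ω * δ ω)| ≤ |(-e0star ω)| + |p0star ω * δ ω| := abs_add_le _ _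
      _ ≤ C + C * K := by
          rw [abs_neg]
          exact add_le_add (he0sb ω) (abs_mul_le' (hp0sb ω) (hδb ω))
  -- integrability of basic pieces
  have hZint : Integrable Z μ := int_bdd hZm'.aestronglyMeasurable bZ
  have h1Zint : Integrable (fun ω => 1 - Z ω) μ :=
    int_bdd (measurable_const.sub hZm').aestronglyMeasurable b1Z
  have hAZint : Integrable (fun ω => A ω * Z ω) μ :=
    int_bdd (hAm'.mul hZm').aestronglyMeasurable fun ω => abs_mul_le' (bA ω) (bZ ω)
  have hA1Zint : Integrable (fun ω => A ω * (1 - Z ω)) μ :=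
    int_bdd (hAm'.mul (measurable_const.sub hZm')).aestronglyMeasurable
      fun ω => abs_mul_le' (bA ω) (b1Z ω)
  have hgqint : Integrable (fun ω => q ω * Z ω) μ :=
    int_bdd (hqm0.mul hZm').aestronglyMeasurable fun ω => abs_mul_le' (hqb ω) (bZ ω)
  have hgq'int : Integrable (fun ω => q ω * (1 - Z ω)) μ :=
    int_bdd (hqm0.mul (measurable_const.sub hZm')).aestronglyMeasurable
      fun ω => abs_mul_le' (hqb ω) (b1Z ω)
  have hgdint : Integrable (fun ω => δ ω * (A ω * Z ω)) μ :=
    int_bdd (hδm0.mul (hAm'.mul hZm')).aestronglyMeasurable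
      fun ω => abs_mul_le' (hδb ω) (abs_mul_le' (bA ω) (bZ ω))
  have hgd'int : Integrable (fun ω => δ ω * (A ω * (1 - Z ω))) μ :=
    int_bdd (hδm0.mul (hAm'.mul (measurable_const.sub hZm'))).aestronglyMeasurable
      fun ω => abs_mul_le' (hδb ω) (abs_mul_le' (bA ω) (b1Z ω))
  have hintYZ' : Integrable (fun ω => Y ω * (1 - A ω) * (1 - Z ω)) μ := by
    have heq : (fun ω => Y ω * (1 - A ω) * (1 - Z ω))
        = fun ω => Y ω * (1 - A ω) - Y ω * (1 - A ω) * Z ω := funext fun ω => by ring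
    rw [heq]; exact hintY.sub hintYZ
  -- decomposition of G1, G2
  have hG1eq : G1 = (fun ω => Y ω * (1 - A ω) * Z ω) + (fun ω => q ω * Z ω)
      - fun ω => δ ω * (A ω * Z ω) := by
    rw [hG1def, hVdef, hqdef]
    funext ω
    simp only [Pi.add_apply, Pi.sub_apply]
    ring
  have hG2eq : G2 = (fun ω => Y ω * (1 - A ω) * (1 - Z ω)) + (fun ω => q ω * (1 - Z ω))
      - fun ω => δ ω * (A ω * (1 - Z ω)) := by
    rw [hG2def, hVdef, hqdef]
    funext ω
    simp only [Pi.add_apply, Pi.sub_apply]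
    ring
  have hG1int : Integrable G1 μ := by
    rw [hG1eq]; exact (hintYZ.add hgqint).sub hgdint
  have hG2int : Integrable G2 μ := by
    rw [hG2eq]; exact (hintYZ'.add hgq'int).sub hgd'int
  -- conditional expectations
  have hcgq : μ[(fun ω => q ω * Z ω) | mX] =ᵐ[μ] fun ω => q ω * π1 ω := by
    refine (condExp_mul_of_stronglyMeasurable_left hqm.stronglyMeasurable hgqint hZint).trans ?_
    filter_upwards [hπ1] with ω hω
    simp only [Pi.mul_apply, hω]
  have hcgq' : μ[(fun ω => q ω * (1 - Z ω)) | mX] =ᵐ[μ] fun ω => q ω * π0 ω := by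
    have hc1Z : μ[(fun ω => 1 - Z ω) | mX] =ᵐ[μ] fun ω => π0 ω := by
      have h := condExp_sub (μ := μ) (m := mX) (f := fun _ => (1:ℝ)) (g := Z)
        (integrable_const 1) hZint
      refine h.trans ?_
      filter_upwards [hπ1] with ω hω
      simp only [Pi.sub_apply, condExp_const hmX, hω, hπ01 ω]
    refine (condExp_mul_of_stronglyMeasurable_left hqm.stronglyMeasurable hgq'int h1Zint).trans ?_
    filter_upwards [hc1Z] with ω hω
    simp only [Pi.mul_apply, hω]
  have hcgd : μ[(fun ω => δ ω * (A ω * Z ω)) | mX] =ᵐ[μ] fun ω => δ ω * (p1 ω * π1 ω) := by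
    refine (condExp_mul_of_stronglyMeasurable_left hδm.stronglyMeasurable hgdint hAZint).trans ?_
    filter_upwards [hp1] with ω hω
    simp only [Pi.mul_apply, hω]
  have hcgd' : μ[(fun ω => δ ω * (A ω * (1 - Z ω))) | mX]
      =ᵐ[μ] fun ω => δ ω * (p0 ω * π0 ω) := by
    refine (condExp_mul_of_stronglyMeasurable_left hδm.stronglyMeasurable hgd'int hA1Zint).trans ?_
    filter_upwards [hp0] with ω hω
    simp only [Pi.mul_apply, hω]
  have hG1cond : μ[G1 | mX] =ᵐ[μ]
      fun ω => π1 ω * (e1 ω - e0star ω - (p1 ω - p0star ω) * δ ω) := by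
    rw [hG1eq]
    refine ((condExp_sub (hintYZ.add hgqint) hgdint mX).trans
      (((condExp_add hintYZ hgqint mX).sub Filter.EventuallyEq.rfl))).trans ?_
    filter_upwards [he1, hcgq, hcgd] with ω h0 h1 h2
    simp only [Pi.add_apply, Pi.sub_apply, h0, h1, h2]
    simp only [hqdef]
    ring
  have hG2cond : μ[G2 | mX] =ᵐ[μ]
      fun ω => π0 ω * (e0 ω - e0star ω - (p0 ω - p0star ω) * δ ω) := by
    rw [hG2eq]
    refine ((condExp_sub (hintYZ'.add hgq'int) hgd'int mX).trans
      (((condExp_add hintYZ' hgq'int mX).sub Filter.EventuallyEq.rfl))).trans ?_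
    filter_upwards [he0, hcgq', hcgd'] with ω h0 h1 h2
    simp only [Pi.add_apply, Pi.sub_apply, h0, h1, h2]
    simp only [hqdef]
    ring
  -- key pointwise identity
  have hT2key : ∀ ω, T2 ω = f1 ω * G1 ω + f2 ω * G2 ω := by
    intro ω
    rw [hT2def]
    simp only [hT1def, hf1def, hf2def, hG1def, hG2def, hVdef, hρsdef, hOmdef, hEIF ω]
    rcases hZ ω with h | h <;> rw [h] <;>
      field_simp [hcne, hπ0ne ω, hπ1ne ω, hgapne ω] <;> ring
  -- integrability of the main pieces
  have hT1int : Integrable T1 μ := by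
    have heq : T1 = (fun ω => A ω * Y ω) + fun ω => A ω * (δ ω - ψ) := by
      rw [hT1def]; funext ω; simp only [Pi.add_apply]; ring
    rw [heq]
    refine hintAY.add (int_bdd (hAm'.mul (hδm0.sub measurable_const)).aestronglyMeasurable
      (D := 1 * (K + |ψ|)) fun ω => abs_mul_le' (bA ω) ?_)
    calc |δ ω - ψ| ≤ |δ ω| + |ψ| := abs_sub _ _
      _ ≤ K + |ψ| := by linarith [hδb ω]
  have hT2int : Integrable T2 μ := by
    rw [hT2def]; exact (hEIFint.const_mul c).sub hT1int
  have hZT2 : ∀ ω, Z ω * T2 ω = f1 ω * G1 ω := by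
    intro ω
    rw [hT2key ω]
    rcases hZ ω with h | h <;>
      simp only [hG1def, hG2def, h] <;> ring
  have h1ZT2 : ∀ ω, (1 - Z ω) * T2 ω = f2 ω * G2 ω := by
    intro ω
    rw [hT2key ω]
    rcases hZ ω with h | h <;>
      simp only [hG1def, hG2def, h] <;> ring
  have hf1G1int : Integrable (f1 * G1) μ := by
    refine (Integrable.bdd_mul hT2int hZm'.aestronglyMeasurable
      (c := 1) (Filter.Eventually.of_forall fun ω => by simpa [Real.norm_eq_abs] using bZ ω)).congr
      (Filter.Eventually.of_forall fun ω => ?_)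
    exact hZT2 ω
  have hf2G2int : Integrable (f2 * G2) μ := by
    refine (Integrable.bdd_mul hT2int (measurable_const.sub hZm').aestronglyMeasurable
      (c := 1) (Filter.Eventually.of_forall fun ω => by simpa [Real.norm_eq_abs] using b1Z ω)).congr
      (Filter.Eventually.of_forall fun ω => ?_)
    exact h1ZT2 ω
  -- integrals of the correction terms
  have hf1G1 : ∫ ω, f1 ω * G1 ω ∂μ
      = ∫ ω, ρs ω * Om ω * (e1 ω - e0star ω - (p1 ω - p0star ω) * δ ω) ∂μ := by
    have h1 : μ[f1 * G1 | mX] =ᵐ[μ] f1 * μ[G1 | mX] :=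
      condExp_mul_of_stronglyMeasurable_left hf1sm hf1G1int hG1int
    have h2 : f1 * μ[G1 | mX] =ᵐ[μ]
        fun ω => ρs ω * Om ω * (e1 ω - e0star ω - (p1 ω - p0star ω) * δ ω) := by
      filter_upwards [hG1cond] with ω hω
      simp only [Pi.mul_apply, hω, hf1def]
      field_simp [hπ1ne ω]
    calc ∫ ω, f1 ω * G1 ω ∂μ = ∫ ω, (μ[f1 * G1 | mX]) ω ∂μ := (integral_condExp hmX).symm
      _ = _ := integral_congr_ae (h1.trans h2)
  have hf2G2 : ∫ ω, f2 ω * G2 ω ∂μ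
      = ∫ ω, -(ρs ω * Om ω * (e0 ω - e0star ω - (p0 ω - p0star ω) * δ ω)) ∂μ := by
    have h1 : μ[f2 * G2 | mX] =ᵐ[μ] f2 * μ[G2 | mX] :=
      condExp_mul_of_stronglyMeasurable_left hf2sm hf2G2int hG2int
    have h2 : f2 * μ[G2 | mX] =ᵐ[μ]
        fun ω => -(ρs ω * Om ω * (e0 ω - e0star ω - (p0 ω - p0star ω) * δ ω)) := by
      filter_upwards [hG2cond] with ω hω
      simp only [Pi.mul_apply, hω, hf2def]
      field_simp [hπ0ne ω]
    calc ∫ ω, f2 ω * G2 ω ∂μ = ∫ ω, (μ[f2 * G2 | mX]) ω ∂μ := (integral_condExp hmX).symm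
      _ = _ := integral_congr_ae (h1.trans h2)
  -- the two corrected terms cancel
  have hδmul : ∀ ω, δ ω * (p1 ω - p0 ω) = e1 ω - e0 ω := by
    intro ω
    rw [hδ ω]
    exact div_mul_cancel₀ _ (hgapne ω)
  have hcancel : (fun ω => -(ρs ω * Om ω * (e0 ω - e0star ω - (p0 ω - p0star ω) * δ ω)))
      = fun ω => -(ρs ω * Om ω * (e1 ω - e0star ω - (p1 ω - p0star ω) * δ ω)) := by
    funext ω
    have h2 := hδmul ω
    have : e0 ω - e0star ω - (p0 ω - p0star ω) * δ ω
        = e1 ω - e0star ω - (p1 ω - p0star ω) * δ ω := by linear_combination h2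
    rw [this]
  -- integral of T1 vanishes
  have hAYδint : Integrable (fun ω => A ω * (Y ω + δ ω)) μ := by
    have heq : (fun ω => A ω * (Y ω + δ ω))
        = (fun ω => A ω * Y ω) + fun ω => A ω * δ ω := funext fun ω => by
      simp only [Pi.add_apply]; ring
    rw [heq]
    exact hintAY.add (int_bdd (hAm'.mul hδm0).aestronglyMeasurable
      fun ω => abs_mul_le' (bA ω) (hδb ω))
  have hT1zero : ∫ ω, T1 ω ∂μ = 0 := by
    have heq : T1 = fun ω => A ω * (Y ω + δ ω) - ψ * A ω := by
      rw [hT1def]; funext ω; ring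
    rw [heq, integral_sub hAYδint ((int_bdd hAm'.aestronglyMeasurable bA).const_mul ψ),
      integral_const_mul, ← hc, ← hψ]
    ring
  -- assemble
  have hEIFeq : EIF = fun ω => c⁻¹ * (T1 ω + (f1 ω * G1 ω + f2 ω * G2 ω)) := by
    funext ω
    have h2 : c * EIF ω = T1 ω + (f1 ω * G1 ω + f2 ω * G2 ω) := by
      have h3 := hT2key ω
      simp only [hT2def] at h3
      linarith
    rw [← h2]
    exact (inv_mul_cancel_left₀ hcne _).symm
  have hf1G1int' : Integrable (fun ω => f1 ω * G1 ω) μ := hf1G1int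
  have hf2G2int' : Integrable (fun ω => f2 ω * G2 ω) μ := hf2G2int
  have hsumint : Integrable (fun ω => f1 ω * G1 ω + f2 ω * G2 ω) μ := hf1G1int'.add hf2G2int'
  have hs1 := integral_add hT1int hsumint
  have hs2 := integral_add hf1G1int' hf2G2int'
  simp only [hEIFeq]
  rw [integral_const_mul, hs1, hs2, hT1zero, hf1G1, hf2G2, hcancel, integral_neg]
  ring
end

section
/- Under the MIVHR model, the observed outcome is conditionally independent of the instrument among the treated: Y ⟂ Z | A=1, X. In particular, the conditional law of Y¹ given A=1 equals its conditional law given (A=1, Z), since f(Yᵃ|U,X) = f(Yᵃ|U,X,A=1,Z) and f(U|A=1,X) = f(U|A=1,Z,X). -/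
open MeasureTheory

/-- Under the MIVHR model, `Y ⟂ Z | A=1, X`.

Working conditionally on a covariate value `X = x` (suppressed): `f` is the density of
the confounder `U` w.r.t. `ν`.  By strong latent ignorability & exclusion (A3-strong)
together with consistency, the conditional density of `Y` given `(U=u, A=1, Z=z)`,
denoted `q z y u`, does not depend on `z` (hypothesis `hq`).  By the multiplicative model
(A4) and `U ⟂ Z | X` (A2), the conditional density of `U` given `(A=1, Z=z)` is, by
Bayes' rule, `exp{α₁(z)+α₂(u)} f(u) / ∫ exp{α₁(z)+α₂(u')} f(u') dν`.  The conclusion: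
the conditional density of `Y` given `(A=1, Z=z)`, obtained by mixing `q` over the
confounder, is the same for `z = 0` and `z = 1`; i.e. `f(Y|A=1,Z=1) = f(Y|A=1,Z=0)`,
so `Y ⟂ Z | A=1, X` and the law of `Y¹` given `A=1` equals its law given `(A=1,Z)`. -/
theorem mivhr_outcome_indep_instrument_given_treated
    (𝓤 𝓨 : Type*) [MeasurableSpace 𝓤] (ν : Measure 𝓤)
    (f : 𝓤 → ℝ) (α₁ : Fin 2 → ℝ) (α₂ : 𝓤 → ℝ)
    (q : Fin 2 → 𝓨 → 𝓤 → ℝ)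
    (hq : ∀ y u, q 1 y u = q 0 y u)
    (hf : ∀ u, 0 ≤ f u) (hdens : ∫ u, f u ∂ν = 1)
    (hprop : ∀ (z : Fin 2) u, Real.exp (α₁ z + α₂ u) < 1)
    (hint : Integrable (fun u => Real.exp (α₂ u) * f u) ν)
    (hintq : ∀ (z : Fin 2) (y : 𝓨),
      Integrable (fun u => q z y u * (Real.exp (α₁ z + α₂ u) * f u)) ν)
    (hpos : 0 < ∫ u, Real.exp (α₂ u) * f u ∂ν) :
    ∀ y : 𝓨,
      (∫ u, q 1 y u * (Real.exp (α₁ 1 + α₂ u) * f u) ∂ν)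
          / (∫ u, Real.exp (α₁ 1 + α₂ u) * f u ∂ν)
        = (∫ u, q 0 y u * (Real.exp (α₁ 0 + α₂ u) * f u) ∂ν)
          / (∫ u, Real.exp (α₁ 0 + α₂ u) * f u ∂ν) := by
  intro y
  have key : ∀ z : Fin 2,
      (∫ u, q z y u * (Real.exp (α₁ z + α₂ u) * f u) ∂ν)
        = Real.exp (α₁ z) * ∫ u, q z y u * (Real.exp (α₂ u) * f u) ∂ν := by
    intro z
    rw [← integral_const_mul]
    congr 1; funext u
    rw [Real.exp_add]; ring
  have keyd : ∀ z : Fin 2,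
      (∫ u, Real.exp (α₁ z + α₂ u) * f u ∂ν)
        = Real.exp (α₁ z) * ∫ u, Real.exp (α₂ u) * f u ∂ν := by
    intro z
    rw [← integral_const_mul]
    congr 1; funext u
    rw [Real.exp_add]; ring
  rw [key, key, keyd, keyd,
    mul_div_mul_left _ _ (Real.exp_ne_zero _),
    mul_div_mul_left _ _ (Real.exp_ne_zero _)]
  congr 1
  exact integral_congr_ae (Filter.Eventually.of_forall fun u => by simp only [hq])
end

section
/- If estimated functions p̂₁, p̂₀, ê₁, ê₀ satisfy (p̂₁−p̂₀)(p₁−p₀) > ε almost surely for some ε > 0 and all functions are uniformly bounded, then the L²-error of the plug-in ratio estimator satisfies ‖(ê₁−ê₀)/(p̂₁−p̂₀) − (e₁−e₀)/(p₁−p₀)‖ ≤ C(‖ê₁−e₁‖ + ‖ê₀−e₀‖ + ‖p̂₁−p₁‖ + ‖p̂₀−p₀‖) for a constant C depending only on ε and the uniform bounds. -/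
set_option maxHeartbeats 1000000

open MeasureTheory

lemma core_alg (C d c x y : ℝ) (hC : 0 < C) (hd2 : d ^ 2 ≤ 4 * C ^ 2) (hc2 : c ^ 2 ≤ 4 * C ^ 2) :
    (d * x + c * y) ^ 2 ≤ 8 * C ^ 2 * (x ^ 2 + y ^ 2) := by
  nlinarith [sq_nonneg (d * x - c * y), mul_le_mul_of_nonneg_right hd2 (sq_nonneg x),
    mul_le_mul_of_nonneg_right hc2 (sq_nonneg y), sq_nonneg (d*y - c*x), sq_nonneg (d*y + c*x)]

lemma sq_bd (C u v : ℝ) (hu : |u| ≤ C) (hv : |v| ≤ C) : (u - v) ^ 2 ≤ 4 * C ^ 2 := by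
  obtain ⟨h1, h2⟩ := abs_le.mp hu; obtain ⟨h3, h4⟩ := abs_le.mp hv
  nlinarith [mul_nonneg (by linarith : (0:ℝ) ≤ 2*C - (u - v)) (by linarith : (0:ℝ) ≤ 2*C + (u - v))]

lemma aux_pt (ε C p0 p1 e0 e1 ph0 ph1 eh0 eh1 : ℝ) (hε : 0 < ε) (hC : 0 < C)
    (h0 : |p0| ≤ C) (h1 : |p1| ≤ C) (h2 : |e0| ≤ C) (h3 : |e1| ≤ C)
    (h4 : |ph0| ≤ C) (h5 : |ph1| ≤ C) (h6 : |eh0| ≤ C) (h7 : |eh1| ≤ C)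
    (hbd : ε < (ph1 - ph0) * (p1 - p0)) :
    ((eh1 - eh0) / (ph1 - ph0) - (e1 - e0) / (p1 - p0)) ^ 2
      ≤ (4 * C / ε) ^ 2 * ((eh1 - e1) ^ 2 + (eh0 - e0) ^ 2 + (ph1 - p1) ^ 2 + (ph0 - p0) ^ 2) := by
  have hbd0 : (0:ℝ) < (ph1 - ph0) * (p1 - p0) := hε.trans hbd
  have hb : ph1 - ph0 ≠ 0 := fun h => by rw [h, zero_mul] at hbd0; exact lt_irrefl 0 hbd0
  have hd : p1 - p0 ≠ 0 := fun h => by rw [h, mul_zero] at hbd0; exact lt_irrefl 0 hbd0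
  have key : (eh1 - eh0) / (ph1 - ph0) - (e1 - e0) / (p1 - p0)
      = ((eh1 - eh0) * (p1 - p0) - (e1 - e0) * (ph1 - ph0)) / ((ph1 - ph0) * (p1 - p0)) := by
    field_simp
  rw [key, div_pow]
  have hsq : ε ^ 2 ≤ ((ph1 - ph0) * (p1 - p0)) ^ 2 := by nlinarith
  refine (div_le_div_of_nonneg_left (sq_nonneg _) (by positivity) hsq).trans ?_
  rw [div_le_iff₀ (by positivity : (0:ℝ) < ε ^ 2)]
  have hnum : ((eh1 - eh0) * (p1 - p0) - (e1 - e0) * (ph1 - ph0)) ^ 2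
      ≤ 16 * C ^ 2 * ((eh1 - e1) ^ 2 + (eh0 - e0) ^ 2 + (ph1 - p1) ^ 2 + (ph0 - p0) ^ 2) := by
    have heq : (eh1 - eh0) * (p1 - p0) - (e1 - e0) * (ph1 - ph0)
        = (p1 - p0) * ((eh1 - e1) - (eh0 - e0)) + (e1 - e0) * (-((ph1 - p1) - (ph0 - p0))) := by
      ring
    rw [heq]
    have := core_alg C (p1 - p0) (e1 - e0) ((eh1 - e1) - (eh0 - e0)) (-((ph1 - p1) - (ph0 - p0)))
      hC (sq_bd C p1 p0 h1 h0) (sq_bd C e1 e0 h3 h2)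
    refine this.trans ?_
    have hA : ((eh1 - e1) - (eh0 - e0)) ^ 2 ≤ 2 * ((eh1 - e1) ^ 2 + (eh0 - e0) ^ 2) := by
      nlinarith [sq_nonneg ((eh1 - e1) + (eh0 - e0))]
    have hB : (-((ph1 - p1) - (ph0 - p0))) ^ 2 ≤ 2 * ((ph1 - p1) ^ 2 + (ph0 - p0) ^ 2) := by
      nlinarith [sq_nonneg ((ph1 - p1) + (ph0 - p0))]
    calc 8 * C ^ 2 * (((eh1 - e1) - (eh0 - e0)) ^ 2 + (-((ph1 - p1) - (ph0 - p0))) ^ 2)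
        ≤ 8 * C ^ 2 * (2 * ((eh1 - e1) ^ 2 + (eh0 - e0) ^ 2) + 2 * ((ph1 - p1) ^ 2 + (ph0 - p0) ^ 2)) := by
          gcongr
      _ = 16 * C ^ 2 * ((eh1 - e1) ^ 2 + (eh0 - e0) ^ 2 + (ph1 - p1) ^ 2 + (ph0 - p0) ^ 2) := by ring
  refine hnum.trans (le_of_eq ?_)
  have hεne : ε ≠ 0 := ne_of_gt hε
  have h2 : (4 * C / ε) ^ 2 * ε ^ 2 = 16 * C ^ 2 := by field_simp; ring
  calc 16 * C ^ 2 * ((eh1 - e1) ^ 2 + (eh0 - e0) ^ 2 + (ph1 - p1) ^ 2 + (ph0 - p0) ^ 2)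
      = (4 * C / ε) ^ 2 * ε ^ 2 * ((eh1 - e1) ^ 2 + (eh0 - e0) ^ 2 + (ph1 - p1) ^ 2 + (ph0 - p0) ^ 2) := by rw [h2]
    _ = (4 * C / ε) ^ 2 * ((eh1 - e1) ^ 2 + (eh0 - e0) ^ 2 + (ph1 - p1) ^ 2 + (ph0 - p0) ^ 2) * ε ^ 2 := by ring


lemma sqrt_add_le' (x y : ℝ) (hx : 0 ≤ x) (hy : 0 ≤ y) :
    Real.sqrt (x + y) ≤ Real.sqrt x + Real.sqrt y := by
  have h : x + y ≤ (Real.sqrt x + Real.sqrt y) ^ 2 := by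
    nlinarith [Real.sq_sqrt hx, Real.sq_sqrt hy,
      mul_nonneg (Real.sqrt_nonneg x) (Real.sqrt_nonneg y)]
  calc Real.sqrt (x + y) ≤ Real.sqrt ((Real.sqrt x + Real.sqrt y) ^ 2) := Real.sqrt_le_sqrt h
    _ = Real.sqrt x + Real.sqrt y := Real.sqrt_sq (by positivity)

/-- If `(p̂₁−p̂₀)(p₁−p₀) > ε` almost surely for some `ε > 0` and all functions
are uniformly bounded by `C`, then the `L²`-error of the plug-in ratio estimator
`δ̃ = (ê₁−ê₀)/(p̂₁−p̂₀)` of `δ = (e₁−e₀)/(p₁−p₀)` satisfies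
`‖δ̃ − δ‖₂ ≤ K(‖ê₁−e₁‖₂ + ‖ê₀−e₀‖₂ + ‖p̂₁−p₁‖₂ + ‖p̂₀−p₀‖₂)`,
for a constant `K` depending only on `ε` and the uniform bound `C`. -/
theorem ratio_plugin_rate (ε C : ℝ) (hε : 0 < ε) (hC : 0 < C) :
    ∃ K : ℝ, 0 < K ∧
      ∀ (Ω : Type) (_ : MeasurableSpace Ω) (μ : Measure Ω), IsProbabilityMeasure μ →
      ∀ (p0 p1 e0 e1 phat0 phat1 ehat0 ehat1 : Ω → ℝ),
        Measurable p0 → Measurable p1 → Measurable e0 → Measurable e1 →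
        Measurable phat0 → Measurable phat1 → Measurable ehat0 → Measurable ehat1 →
        (∀ ω, |p0 ω| ≤ C ∧ |p1 ω| ≤ C ∧ |e0 ω| ≤ C ∧ |e1 ω| ≤ C ∧
          |phat0 ω| ≤ C ∧ |phat1 ω| ≤ C ∧ |ehat0 ω| ≤ C ∧ |ehat1 ω| ≤ C) →
        (∀ᵐ ω ∂μ, ε < (phat1 ω - phat0 ω) * (p1 ω - p0 ω)) →
        (∫ ω, ((ehat1 ω - ehat0 ω) / (phat1 ω - phat0 ω)
            - (e1 ω - e0 ω) / (p1 ω - p0 ω)) ^ 2 ∂μ) ^ ((1:ℝ)/2)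
          ≤ K * ((∫ ω, (ehat1 ω - e1 ω) ^ 2 ∂μ) ^ ((1:ℝ)/2)
              + (∫ ω, (ehat0 ω - e0 ω) ^ 2 ∂μ) ^ ((1:ℝ)/2)
              + (∫ ω, (phat1 ω - p1 ω) ^ 2 ∂μ) ^ ((1:ℝ)/2)
              + (∫ ω, (phat0 ω - p0 ω) ^ 2 ∂μ) ^ ((1:ℝ)/2)) := by
  refine ⟨4 * C / ε, by positivity, ?_⟩
  intro Ω mΩ μ hμ p0 p1 e0 e1 phat0 phat1 ehat0 ehat1
    hmp0 hmp1 hme0 hme1 hmph0 hmph1 hmeh0 hmeh1 hbound hae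
  set f : Ω → ℝ := fun ω => ((ehat1 ω - ehat0 ω) / (phat1 ω - phat0 ω)
      - (e1 ω - e0 ω) / (p1 ω - p0 ω)) ^ 2 with hf
  set g1 : Ω → ℝ := fun ω => (ehat1 ω - e1 ω) ^ 2 with hg1
  set g2 : Ω → ℝ := fun ω => (ehat0 ω - e0 ω) ^ 2 with hg2
  set g3 : Ω → ℝ := fun ω => (phat1 ω - p1 ω) ^ 2 with hg3
  set g4 : Ω → ℝ := fun ω => (phat0 ω - p0 ω) ^ 2 with hg4
  have hbd : ∀ (u v : Ω → ℝ), Measurable u → Measurable v → (∀ ω, |u ω| ≤ C) →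
      (∀ ω, |v ω| ≤ C) → Integrable (fun ω => (u ω - v ω) ^ 2) μ := by
    intro u v hu hv hub hvb
    refine Integrable.mono' (integrable_const (4 * C ^ 2)) ?_ ?_
    · exact ((hu.sub hv).pow_const 2).aestronglyMeasurable
    · filter_upwards with ω
      rw [Real.norm_eq_abs, abs_of_nonneg (sq_nonneg _)]
      exact sq_bd C (u ω) (v ω) (hub ω) (hvb ω)
  have hi1 : Integrable g1 μ := hbd _ _ hmeh1 hme1 (fun ω => (hbound ω).2.2.2.2.2.2.2)
    (fun ω => (hbound ω).2.2.2.1)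
  have hi2 : Integrable g2 μ := hbd _ _ hmeh0 hme0 (fun ω => (hbound ω).2.2.2.2.2.2.1)
    (fun ω => (hbound ω).2.2.1)
  have hi3 : Integrable g3 μ := hbd _ _ hmph1 hmp1 (fun ω => (hbound ω).2.2.2.2.2.1)
    (fun ω => (hbound ω).2.1)
  have hi4 : Integrable g4 μ := hbd _ _ hmph0 hmp0 (fun ω => (hbound ω).2.2.2.2.1)
    (fun ω => (hbound ω).1)
  have hpt : ∀ᵐ ω ∂μ, f ω ≤ (4 * C / ε) ^ 2 * (g1 ω + g2 ω + g3 ω + g4 ω) := by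
    filter_upwards [hae] with ω hω
    obtain ⟨b0, b1, b2, b3, b4, b5, b6, b7⟩ := hbound ω
    exact aux_pt ε C (p0 ω) (p1 ω) (e0 ω) (e1 ω) (phat0 ω) (phat1 ω) (ehat0 ω) (ehat1 ω)
      hε hC b0 b1 b2 b3 b4 b5 b6 b7 hω
  have hif : Integrable f μ := by
    refine Integrable.mono' (integrable_const ((4 * C / ε) ^ 2 * (16 * C ^ 2))) ?_ ?_
    · exact ((((hmeh1.sub hmeh0).div (hmph1.sub hmph0)).sub
        ((hme1.sub hme0).div (hmp1.sub hmp0))).pow_const 2).aestronglyMeasurable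
    · filter_upwards [hpt] with ω hω
      rw [Real.norm_eq_abs, abs_of_nonneg (sq_nonneg _)]
      refine hω.trans ?_
      have b1 : g1 ω ≤ 4 * C ^ 2 := sq_bd C _ _ (hbound ω).2.2.2.2.2.2.2 (hbound ω).2.2.2.1
      have b2 : g2 ω ≤ 4 * C ^ 2 := sq_bd C _ _ (hbound ω).2.2.2.2.2.2.1 (hbound ω).2.2.1
      have b3 : g3 ω ≤ 4 * C ^ 2 := sq_bd C _ _ (hbound ω).2.2.2.2.2.1 (hbound ω).2.1
      have b4 : g4 ω ≤ 4 * C ^ 2 := sq_bd C _ _ (hbound ω).2.2.2.2.1 (hbound ω).1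
      have : g1 ω + g2 ω + g3 ω + g4 ω ≤ 16 * C ^ 2 := by linarith
      exact mul_le_mul_of_nonneg_left this (by positivity)
  have hint : ∫ ω, f ω ∂μ
      ≤ (4 * C / ε) ^ 2 * ((∫ ω, g1 ω ∂μ) + (∫ ω, g2 ω ∂μ) + (∫ ω, g3 ω ∂μ) + (∫ ω, g4 ω ∂μ)) := by
    have h := integral_mono_ae hif ((((hi1.add hi2).add hi3).add hi4).const_mul
      ((4 * C / ε) ^ 2)) hpt
    simp only [Pi.add_apply] at h
    have h12 : Integrable (fun a => g1 a + g2 a) μ := hi1.add hi2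
    have h123 : Integrable (fun a => g1 a + g2 a + g3 a) μ := h12.add hi3
    rwa [integral_const_mul, integral_add h123 hi4, integral_add h12 hi3,
      integral_add hi1 hi2] at h
  have hS1 : 0 ≤ ∫ ω, g1 ω ∂μ := integral_nonneg fun ω => sq_nonneg _
  have hS2 : 0 ≤ ∫ ω, g2 ω ∂μ := integral_nonneg fun ω => sq_nonneg _
  have hS3 : 0 ≤ ∫ ω, g3 ω ∂μ := integral_nonneg fun ω => sq_nonneg _
  have hS4 : 0 ≤ ∫ ω, g4 ω ∂μ := integral_nonneg fun ω => sq_nonneg _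
  have hF : 0 ≤ ∫ ω, f ω ∂μ := integral_nonneg fun ω => sq_nonneg _
  simp only [← Real.sqrt_eq_rpow]
  have hKnn : (0:ℝ) ≤ 4 * C / ε := by positivity
  calc Real.sqrt (∫ ω, f ω ∂μ)
      ≤ Real.sqrt ((4 * C / ε) ^ 2 * ((∫ ω, g1 ω ∂μ) + (∫ ω, g2 ω ∂μ) + (∫ ω, g3 ω ∂μ)
          + (∫ ω, g4 ω ∂μ))) := Real.sqrt_le_sqrt hint
    _ = (4 * C / ε) * Real.sqrt ((∫ ω, g1 ω ∂μ) + (∫ ω, g2 ω ∂μ) + (∫ ω, g3 ω ∂μ)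
          + (∫ ω, g4 ω ∂μ)) := by
        rw [Real.sqrt_mul (sq_nonneg _), Real.sqrt_sq hKnn]
    _ ≤ (4 * C / ε) * (Real.sqrt (∫ ω, g1 ω ∂μ) + Real.sqrt (∫ ω, g2 ω ∂μ)
          + Real.sqrt (∫ ω, g3 ω ∂μ) + Real.sqrt (∫ ω, g4 ω ∂μ)) := by
        refine mul_le_mul_of_nonneg_left ?_ hKnn
        calc Real.sqrt ((∫ ω, g1 ω ∂μ) + (∫ ω, g2 ω ∂μ) + (∫ ω, g3 ω ∂μ) + (∫ ω, g4 ω ∂μ))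
            ≤ Real.sqrt ((∫ ω, g1 ω ∂μ) + (∫ ω, g2 ω ∂μ) + (∫ ω, g3 ω ∂μ))
              + Real.sqrt (∫ ω, g4 ω ∂μ) := sqrt_add_le' _ _ (by linarith) hS4
          _ ≤ Real.sqrt ((∫ ω, g1 ω ∂μ) + (∫ ω, g2 ω ∂μ)) + Real.sqrt (∫ ω, g3 ω ∂μ)
              + Real.sqrt (∫ ω, g4 ω ∂μ) := by
              have := sqrt_add_le' ((∫ ω, g1 ω ∂μ) + (∫ ω, g2 ω ∂μ)) (∫ ω, g3 ω ∂μ)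
                (by linarith) hS3
              linarith
          _ ≤ Real.sqrt (∫ ω, g1 ω ∂μ) + Real.sqrt (∫ ω, g2 ω ∂μ) + Real.sqrt (∫ ω, g3 ω ∂μ)
              + Real.sqrt (∫ ω, g4 ω ∂μ) := by
              have := sqrt_add_le' (∫ ω, g1 ω ∂μ) (∫ ω, g2 ω ∂μ) hS1 hS2
              linarith
end

section
/- Let c(Y,A,Z) ∈ L²(P) and suppose Y ⟂ Z | A=1. The projection of c onto the space Λ^⊥ = {A(Z−E[Z|A=1])(d(Y)−E[d(Y)|A=1])} is given by c^⊥ = A(Z−E[Z|A=1])(c*(Y)−E[c*(Y)|A=1]) with c*(Y) = E[c(Y,A,Z)(Z−E[Z|A=1]) | Y, A=1] / E[(Z−E[Z|A=1])² | A=1]. -/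
/-!
Write `λ_d = A (Z - mZ) (d(Y) - md)` for the elements of `Λ^⊥`. By the defining property of
`c*`, `⟨c, λ_d⟩ = v · E[A c*(Y) (d(Y) - md)]`. On the other side `A² = A` gives
`⟨c^⊥, λ_d⟩ = E[A (Z - mZ)² (c*(Y) - mc) (d(Y) - md)]`; since `Y ⟂ Z | A = 1` and `Z` is binary,
the factor `(Z - mZ)²` integrates out to its conditional mean `v`, and the `mc` term drops
because `d(Y) - md` has conditional mean zero given `A = 1`. So the two inner products agree.
-/

open MeasureTheory
open scoped ENNReal

section

variable {Ω β : Type*} [MeasurableSpace Ω] [MeasurableSpace β] {μ : Measure Ω}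

-- `μ(Y ∈ s, T | S) = μ(Y ∈ s | S) μ(T | S)` with the denominators cleared
def IndepEventGiven (μ : Measure Ω) (Y : Ω → β) (T S : Set Ω) : Prop :=
  ∀ s, MeasurableSet s → μ (Y ⁻¹' s ∩ T ∩ S) * μ S = μ (Y ⁻¹' s ∩ S) * μ (T ∩ S)

theorem IndepEventGiven.smul_map_restrict_inter_eq {Y : Ω → β} {T S : Set Ω}
    (h : IndepEventGiven μ Y T S) (hY : Measurable Y) :
    μ S • (μ.restrict (T ∩ S)).map Y = μ (T ∩ S) • (μ.restrict S).map Y := by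
  ext s hs
  simp only [Measure.smul_apply, Measure.map_apply hY hs, Measure.restrict_apply (hY hs),
    smul_eq_mul, ← Set.inter_assoc]
  rw [mul_comm, h s hs, mul_comm]

theorem IndepEventGiven.measureReal_smul_setIntegral_inter_eq {E : Type*}
    [NormedAddCommGroup E] [NormedSpace ℝ E] {Y : Ω → β} {T S : Set Ω}
    (h : IndepEventGiven μ Y T S) (hY : Measurable Y) {f : β → E} (hf : StronglyMeasurable f) :
    μ.real S • ∫ ω in T ∩ S, f (Y ω) ∂μ = μ.real (T ∩ S) • ∫ ω in S, f (Y ω) ∂μ := by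
  have := congrArg (fun ν => ∫ y, f y ∂ν) (h.smul_map_restrict_inter_eq hY)
  simpa only [integral_smul_measure, integral_map hY.aemeasurable hf.aestronglyMeasurable,
    measureReal_def] using this

theorem integral_mul_eq_setIntegral {A : Ω → ℝ} (hAm : Measurable A)
    (hA : ∀ ω, A ω = 0 ∨ A ω = 1) (g : Ω → ℝ) :
    ∫ ω, A ω * g ω ∂μ = ∫ ω in {ω | A ω = 1}, g ω ∂μ := by
  rw [← integral_indicator (measurableSet_eq_fun hAm measurable_const)]
  congr 1 with ω
  rcases hA ω with h | h <;> simp [Set.indicator, h]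

theorem integral_mul_mul_eq_setIntegral_inter {A Z : Ω → ℝ} (hAm : Measurable A)
    (hZm : Measurable Z) (hA : ∀ ω, A ω = 0 ∨ A ω = 1) (hZ : ∀ ω, Z ω = 0 ∨ Z ω = 1)
    (g : Ω → ℝ) :
    ∫ ω, A ω * Z ω * g ω ∂μ = ∫ ω in {ω | Z ω = 1} ∩ {ω | A ω = 1}, g ω ∂μ := by
  simp_rw [mul_assoc]
  rw [integral_mul_eq_setIntegral hAm hA, integral_mul_eq_setIntegral hZm hZ,
    Measure.restrict_restrict (measurableSet_eq_fun hZm measurable_const)]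

theorem memLp_top_of_zero_or_one {A : Ω → ℝ} (hAm : Measurable A)
    (hA : ∀ ω, A ω = 0 ∨ A ω = 1) : MemLp A ∞ μ :=
  memLp_top_of_bound hAm.aestronglyMeasurable 1
    (ae_of_all _ fun ω => by rcases hA ω with h | h <;> simp [h])

theorem MeasureTheory.Integrable.of_forall_eq_mul_memLp_top {F φ f : Ω → ℝ}
    (hφ : Integrable φ μ) (hf : MemLp f ∞ μ) (hF : ∀ ω, F ω = φ ω * f ω) : Integrable F μ :=
  (hφ.mul_of_top_left hf).congr (ae_of_all _ fun ω => (hF ω).symm)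

theorem integral_mul_sub_weightedMean_eq_zero {A h : Ω → ℝ} (hA : Integrable A μ)
    (hAh : Integrable (fun ω => A ω * h ω) μ) (hPA : ∫ ω, A ω ∂μ ≠ 0) {m : ℝ}
    (hm : m = (∫ ω, A ω * h ω ∂μ) / (∫ ω, A ω ∂μ)) :
    ∫ ω, A ω * (h ω - m) ∂μ = 0 := by
  simp_rw [mul_sub]
  rw [integral_sub hAh (hA.mul_const _), integral_mul_const, hm]
  field_simp
  ring

theorem integral_mul_integral_mul_mul_comp_eq {A Z : Ω → ℝ} {Y : Ω → β}
    (hAm : Measurable A) (hZm : Measurable Z) (hYm : Measurable Y)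
    (hA : ∀ ω, A ω = 0 ∨ A ω = 1) (hZ : ∀ ω, Z ω = 0 ∨ Z ω = 1)
    (hindep : IndepEventGiven μ Y {ω | Z ω = 1} {ω | A ω = 1})
    {f : β → ℝ} (hf : Measurable f) :
    (∫ ω, A ω ∂μ) * ∫ ω, A ω * Z ω * f (Y ω) ∂μ
      = (∫ ω, A ω * Z ω ∂μ) * ∫ ω, A ω * f (Y ω) ∂μ := by
  have hA1 := integral_mul_eq_setIntegral (μ := μ) hAm hA (fun _ => 1)
  have hAZ1 := integral_mul_mul_eq_setIntegral_inter (μ := μ) hAm hZm hA hZ (fun _ => 1)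
  simp only [mul_one, setIntegral_const, smul_eq_mul] at hA1 hAZ1
  rw [hA1, hAZ1, integral_mul_mul_eq_setIntegral_inter hAm hZm hA hZ,
    integral_mul_eq_setIntegral hAm hA]
  exact hindep.measureReal_smul_setIntegral_inter_eq hYm hf.stronglyMeasurable

theorem integral_mul_sub_sq_mul_comp_eq [IsFiniteMeasure μ] {A Z : Ω → ℝ} {Y : Ω → β}
    (hAm : Measurable A) (hZm : Measurable Z) (hYm : Measurable Y)
    (hA : ∀ ω, A ω = 0 ∨ A ω = 1) (hZ : ∀ ω, Z ω = 0 ∨ Z ω = 1)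
    (hindep : IndepEventGiven μ Y {ω | Z ω = 1} {ω | A ω = 1})
    (hPA : ∫ ω, A ω ∂μ ≠ 0) {mZ v : ℝ} (hmZ : mZ = (∫ ω, A ω * Z ω ∂μ) / (∫ ω, A ω ∂μ))
    (hv : v = (∫ ω, A ω * (Z ω - mZ) ^ 2 ∂μ) / (∫ ω, A ω ∂μ))
    {f : β → ℝ} (hf : Measurable f) (hAf : Integrable (fun ω => A ω * f (Y ω)) μ) :
    ∫ ω, A ω * (Z ω - mZ) ^ 2 * f (Y ω) ∂μ = v * ∫ ω, A ω * f (Y ω) ∂μ := by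
  have hZ_top : MemLp Z ∞ μ := memLp_top_of_zero_or_one hZm hZ
  -- `Z ^ 2 = Z` makes `A (Z - mZ) ^ 2` affine in `A Z`, and `A Z` factors out against `f (Y)`
  have key : ∀ {f : β → ℝ}, Measurable f → Integrable (fun ω => A ω * f (Y ω)) μ →
      ∫ ω, A ω * (Z ω - mZ) ^ 2 * f (Y ω) ∂μ = (mZ - mZ ^ 2) * ∫ ω, A ω * f (Y ω) ∂μ := by
    intro f hf hAf
    have hAZf : ∫ ω, A ω * Z ω * f (Y ω) ∂μ = mZ * ∫ ω, A ω * f (Y ω) ∂μ := by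
      rw [hmZ, div_mul_eq_mul_div, eq_div_iff hPA, mul_comm,
        integral_mul_integral_mul_mul_comp_eq hAm hZm hYm hA hZ hindep hf]
    have hAZf_int : Integrable (fun ω => A ω * Z ω * f (Y ω)) μ :=
      hAf.of_forall_eq_mul_memLp_top hZ_top fun ω => by ring
    calc ∫ ω, A ω * (Z ω - mZ) ^ 2 * f (Y ω) ∂μ
        = ∫ ω, (1 - 2 * mZ) * (A ω * Z ω * f (Y ω)) + mZ ^ 2 * (A ω * f (Y ω)) ∂μ := by
          congr with ω
          rcases hZ ω with h | h <;> rw [h] <;> ring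
      _ = (mZ - mZ ^ 2) * ∫ ω, A ω * f (Y ω) ∂μ := by
          rw [integral_add (hAZf_int.const_mul _) (hAf.const_mul _), integral_const_mul,
            integral_const_mul, hAZf]
          ring
  have hv_eq : v = mZ - mZ ^ 2 := by
    have h1 := key (f := fun _ => 1) measurable_const
      (by simpa using (memLp_top_of_zero_or_one hAm hA).integrable le_top)
    simp only [mul_one] at h1
    rw [hv, h1, mul_div_assoc, div_self hPA, mul_one]
  rw [hv_eq, key hf hAf]

theorem integral_mul_sub_mul_comp_sub_mul_eq [IsFiniteMeasure μ] {A Z : Ω → ℝ} {Y : Ω → β}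
    (hAm : Measurable A) (hZm : Measurable Z) (hYm : Measurable Y)
    (hA : ∀ ω, A ω = 0 ∨ A ω = 1) (hZ : ∀ ω, Z ω = 0 ∨ Z ω = 1)
    (hindep : IndepEventGiven μ Y {ω | Z ω = 1} {ω | A ω = 1})
    (hPA : ∫ ω, A ω ∂μ ≠ 0) {mZ v : ℝ} (hmZ : mZ = (∫ ω, A ω * Z ω ∂μ) / (∫ ω, A ω ∂μ))
    (hv : v = (∫ ω, A ω * (Z ω - mZ) ^ 2 ∂μ) / (∫ ω, A ω ∂μ))
    {φ : β → ℝ} (hφm : Measurable φ) (hφ : Integrable (fun ω => φ (Y ω)) μ) (mφ : ℝ)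
    {d : β → ℝ} (hdm : Measurable d) (hd : MemLp (fun ω => d (Y ω)) ∞ μ)
    {md : ℝ} (hmd : md = (∫ ω, A ω * d (Y ω) ∂μ) / (∫ ω, A ω ∂μ)) :
    ∫ ω, A ω * (Z ω - mZ) * (φ (Y ω) - mφ) * (A ω * (Z ω - mZ) * (d (Y ω) - md)) ∂μ
      = v * ∫ ω, A ω * φ (Y ω) * (d (Y ω) - md) ∂μ := by
  have hA_top : MemLp A ∞ μ := memLp_top_of_zero_or_one hAm hA
  have hAd_top : MemLp (fun ω => A ω * (d (Y ω) - md)) ∞ μ :=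
    (hd.sub (memLp_const md)).mul' (r := ∞) hA_top
  have hmean : ∫ ω, A ω * (d (Y ω) - md) ∂μ = 0 :=
    integral_mul_sub_weightedMean_eq_zero (hA_top.integrable le_top)
      ((hd.mul' (r := ∞) hA_top).integrable le_top) hPA hmd
  calc _ = ∫ ω, A ω * (Z ω - mZ) ^ 2 * ((φ (Y ω) - mφ) * (d (Y ω) - md)) ∂μ := by
        congr with ω
        rcases hA ω with h | h <;> rw [h] <;> ring
    _ = v * ∫ ω, A ω * ((φ (Y ω) - mφ) * (d (Y ω) - md)) ∂μ :=
        integral_mul_sub_sq_mul_comp_eq hAm hZm hYm hA hZ hindep hPA hmZ hv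
          (f := fun y => (φ y - mφ) * (d y - md))
          ((hφm.sub measurable_const).mul (hdm.sub measurable_const))
          ((hφ.sub (integrable_const mφ)).of_forall_eq_mul_memLp_top hAd_top fun ω => by
            simp only [Pi.sub_apply]
            ring)
    _ = v * ∫ ω, A ω * φ (Y ω) * (d (Y ω) - md) - mφ * (A ω * (d (Y ω) - md)) ∂μ := by
        congr 2 with ω
        ring
    _ = v * ∫ ω, A ω * φ (Y ω) * (d (Y ω) - md) ∂μ := by
        rw [integral_sub (hφ.of_forall_eq_mul_memLp_top hAd_top fun ω => by ring)
          ((hAd_top.integrable le_top).const_mul mφ), integral_const_mul, hmean, mul_zero,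
          sub_zero]

end

theorem projection_onto_orthocomplement_general
    (Ω : Type*) [MeasurableSpace Ω] (μ : Measure Ω) [IsProbabilityMeasure μ]
    (A Z Y : Ω → ℝ) (hAm : Measurable A) (hZm : Measurable Z) (hYm : Measurable Y)
    (hA : ∀ ω, A ω = 0 ∨ A ω = 1) (hZ : ∀ ω, Z ω = 0 ∨ Z ω = 1)
    (hPA : 0 < ∫ ω, A ω ∂μ)
    (hindep : ∀ s t : Set ℝ, MeasurableSet s → MeasurableSet t →
      μ ({ω | Y ω ∈ s} ∩ {ω | Z ω ∈ t} ∩ {ω | A ω = 1}) * μ {ω | A ω = 1}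
        = μ ({ω | Y ω ∈ s} ∩ {ω | A ω = 1}) * μ ({ω | Z ω ∈ t} ∩ {ω | A ω = 1}))
    (c : Ω → ℝ) (hc : MemLp c 2 μ)
    (mZ v mc : ℝ)
    (hmZ : mZ = (∫ ω, A ω * Z ω ∂μ) / (∫ ω, A ω ∂μ))
    (hv : v = (∫ ω, A ω * (Z ω - mZ) ^ 2 ∂μ) / (∫ ω, A ω ∂μ))
    (cstar : ℝ → ℝ) (hcstarm : Measurable cstar)
    (hcstar2 : MemLp (fun ω => cstar (Y ω)) 2 μ)
    -- defining property of c*: c*(Y)·v is a version of E[c·(Z−mZ) | Y, A=1]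
    (hcstar : ∀ d : ℝ → ℝ, Measurable d → (∃ Cd : ℝ, ∀ y, |d y| ≤ Cd) →
      ∫ ω, A ω * c ω * (Z ω - mZ) * d (Y ω) ∂μ
        = ∫ ω, A ω * cstar (Y ω) * v * d (Y ω) ∂μ) :
    ∀ d : ℝ → ℝ, Measurable d → (∃ Cd : ℝ, ∀ y, |d y| ≤ Cd) →
      ∫ ω, (c ω - A ω * (Z ω - mZ) * (cstar (Y ω) - mc))
          * (A ω * (Z ω - mZ)
              * (d (Y ω) - (∫ ω', A ω' * d (Y ω') ∂μ) / (∫ ω', A ω' ∂μ))) ∂μ = 0 := by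
  rintro d hdm ⟨Cd, hCd⟩
  set md := (∫ ω', A ω' * d (Y ω') ∂μ) / (∫ ω', A ω' ∂μ) with hmd
  have hd : MemLp (fun ω => d (Y ω)) ∞ μ :=
    memLp_top_of_bound (hdm.comp hYm).aestronglyMeasurable Cd (ae_of_all _ fun ω => hCd (Y ω))
  have hAZ : MemLp (fun ω => A ω * (Z ω - mZ)) ∞ μ :=
    ((memLp_top_of_zero_or_one hZm hZ).sub (memLp_const mZ)).mul' (r := ∞)
      (memLp_top_of_zero_or_one hAm hA)
  have hscore : MemLp (fun ω => A ω * (Z ω - mZ) * (d (Y ω) - md)) ∞ μ :=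
    (hd.sub (memLp_const md)).mul' (r := ∞) hAZ
  have hcross_int : Integrable (fun ω => c ω * (A ω * (Z ω - mZ) * (d (Y ω) - md))) μ :=
    (hc.integrable one_le_two).mul_of_top_left hscore
  have hproj_int : Integrable (fun ω => A ω * (Z ω - mZ) * (cstar (Y ω) - mc)
      * (A ω * (Z ω - mZ) * (d (Y ω) - md))) μ :=
    ((hcstar2.integrable one_le_two).sub (integrable_const mc)).of_forall_eq_mul_memLp_top
      (hscore.mul' (r := ∞) hAZ) fun ω => by simp only [Pi.sub_apply]; ring
  have hcross : ∫ ω, c ω * (A ω * (Z ω - mZ) * (d (Y ω) - md)) ∂μ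
      = v * ∫ ω, A ω * cstar (Y ω) * (d (Y ω) - md) ∂μ := by
    have h := hcstar (fun y => d y - md) (hdm.sub measurable_const)
      ⟨Cd + |md|, fun y => (abs_sub _ _).trans (by linarith [hCd y])⟩
    rw [← integral_const_mul]
    refine (integral_congr_ae ?_).trans (h.trans (integral_congr_ae ?_)) <;>
      exact ae_of_all _ fun ω => by ring
  have hproj := integral_mul_sub_mul_comp_sub_mul_eq hAm hZm hYm hA hZ
    (fun s hs => hindep s {1} hs (measurableSet_singleton 1)) hPA.ne' hmZ hv hcstarm
    (hcstar2.integrable one_le_two) mc hdm hd hmd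
  simp_rw [sub_mul]
  rw [integral_sub hcross_int hproj_int, hcross, hproj, sub_self]

/-- Projection formula onto
`Λ^⊥ = {A(Z−E[Z|A=1])(d(Y)−E[d(Y)|A=1])}`: given `c ∈ L²(P)` and `Y ⟂ Z | A=1`, the
projection of `c` onto `Λ^⊥` is `c^⊥ = A(Z−E[Z|A=1])(c*(Y)−E[c*(Y)|A=1])` with
`c*(Y) = E[c·(Z−E[Z|A=1]) | Y, A=1] / E[(Z−E[Z|A=1])² | A=1]`.

Conditioning on the event `A=1` is encoded by `E[f|A=1] = E[fA]/E[A]`; the defining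
property of `c*` (hypothesis `hcstar`) states that `c*(Y)·v` is a version of the
conditional expectation `E[c·(Z−mZ) | Y, A=1]` where `v = E[(Z−mZ)²|A=1]`; conditional
independence is encoded by `hindep`.  The conclusion states that `c − c^⊥` is orthogonal
to every element `A(Z−mZ)(d(Y)−E[d(Y)|A=1])` of `Λ^⊥` (with `d` bounded measurable),
i.e. `c^⊥` is the orthogonal projection of `c` onto `Λ^⊥` in `L²(P)`. -/
theorem projection_onto_orthocomplement
    (Ω : Type*) [MeasurableSpace Ω] (μ : Measure Ω) [IsProbabilityMeasure μ]
    (A Z Y : Ω → ℝ) (hAm : Measurable A) (hZm : Measurable Z) (hYm : Measurable Y)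
    (hA : ∀ ω, A ω = 0 ∨ A ω = 1) (hZ : ∀ ω, Z ω = 0 ∨ Z ω = 1)
    (hPA : 0 < ∫ ω, A ω ∂μ)
    (hindep : ∀ s t : Set ℝ, MeasurableSet s → MeasurableSet t →
      μ ({ω | Y ω ∈ s} ∩ {ω | Z ω ∈ t} ∩ {ω | A ω = 1}) * μ {ω | A ω = 1}
        = μ ({ω | Y ω ∈ s} ∩ {ω | A ω = 1}) * μ ({ω | Z ω ∈ t} ∩ {ω | A ω = 1}))
    (c : Ω → ℝ) (hc : MemLp c 2 μ) (hcm : Measurable c)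
    (mZ v mc : ℝ)
    (hmZ : mZ = (∫ ω, A ω * Z ω ∂μ) / (∫ ω, A ω ∂μ))
    (hv : v = (∫ ω, A ω * (Z ω - mZ) ^ 2 ∂μ) / (∫ ω, A ω ∂μ))
    (hvpos : 0 < v)
    (cstar : ℝ → ℝ) (hcstarm : Measurable cstar)
    (hcstar2 : MemLp (fun ω => cstar (Y ω)) 2 μ)
    (hmc : mc = (∫ ω, A ω * cstar (Y ω) ∂μ) / (∫ ω, A ω ∂μ))
    -- defining property of c*: c*(Y)·v is a version of E[c·(Z−mZ) | Y, A=1]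
    (hcstar : ∀ d : ℝ → ℝ, Measurable d → (∃ Cd : ℝ, ∀ y, |d y| ≤ Cd) →
      ∫ ω, A ω * c ω * (Z ω - mZ) * d (Y ω) ∂μ
        = ∫ ω, A ω * cstar (Y ω) * v * d (Y ω) ∂μ) :
    ∀ d : ℝ → ℝ, Measurable d → (∃ Cd : ℝ, ∀ y, |d y| ≤ Cd) →
      ∫ ω, (c ω - A ω * (Z ω - mZ) * (cstar (Y ω) - mc))
          * (A ω * (Z ω - mZ)
              * (d (Y ω) - (∫ ω', A ω' * d (Y ω') ∂μ) / (∫ ω', A ω' ∂μ))) ∂μ = 0 :=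
  projection_onto_orthocomplement_general Ω μ A Z Y hAm hZm hYm hA hZ hPA hindep c hc mZ v mc hmZ hv
    cstar hcstarm hcstar2 hcstar
end

section
/- Under Y ⟂ Z | A=1, the projection of the MIV efficient influence function onto Λ^⊥ vanishes: the associated function c*(Y,X) = −(pr(A=1|X)/pr(A=1))·(δ(X)/δ^A(X))·[pr(A=0|Z=0,X)/pr(Z=0|X) + pr(A=0|Z=1,X)/pr(Z=1|X)] does not depend on Y, hence c*(Y,X) − E[c*(Y,X)|A=1,X] = 0 and consequently the EIF under the nonparametric model remains the EIF under the submodel restricted by Y ⟂ Z | A=1, X. -/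
/-!
On `{A = 1}` the term `Y (1 - A)` of the EIF vanishes, so there `EIF = (Y + g Z) / pr(A = 1)`
for an explicit function `g`. Hence the inner product of the EIF with
`A (Z - E[Z | A = 1]) (d Y - E[d Y | A = 1])` is a multiple of the expectation of
`(Y + g Z) (Z - E Z) (d Y - E (d Y))` under the conditional law given `A = 1`. Under that law
`Y` and `Z` are independent, so `Y (d Y - E (d Y))` is independent of the centred `Z - E Z`,
and `g Z (Z - E Z)` of the centred `d Y - E (d Y)`: both products have mean zero.
-/

open MeasureTheory ProbabilityTheory

section Cond

variable {Ω : Type*} [MeasurableSpace Ω] {μ : Measure Ω} {s : Set Ω}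

lemma setIntegral_eq_measureReal_mul_integral_cond [IsFiniteMeasure μ] (f : Ω → ℝ) :
    ∫ x in s, f x ∂μ = μ.real s * ∫ x, f x ∂μ[|s] := by
  rw [ProbabilityTheory.cond, integral_smul_measure, smul_eq_mul, ← mul_assoc,
    ENNReal.toReal_inv, ← measureReal_def]
  rcases eq_or_ne (μ.real s) 0 with h0 | h0
  · rw [Measure.restrict_eq_zero.2 ((measureReal_eq_zero_iff).1 h0)]
    simp
  · rw [mul_inv_cancel₀ h0, one_mul]

lemma MeasureTheory.Integrable.cond {f : Ω → ℝ} (hf : Integrable f μ) :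
    Integrable f μ[|s] := by
  rcases eq_or_ne (μ s) 0 with h0 | h0
  · simp [cond_eq_zero_of_meas_eq_zero h0]
  · exact hf.restrict.smul_measure (ENNReal.inv_ne_top.2 h0)

lemma indepFun_cond_of_measure_inter_mul_eq [IsFiniteMeasure μ] {β β' : Type*}
    [MeasurableSpace β] [MeasurableSpace β'] {f : Ω → β} {g : Ω → β'}
    (hs : MeasurableSet s)
    (h : ∀ t u, MeasurableSet t → MeasurableSet u →
      μ (f ⁻¹' t ∩ g ⁻¹' u ∩ s) * μ s = μ (f ⁻¹' t ∩ s) * μ (g ⁻¹' u ∩ s)) :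
    f ⟂ᵢ[μ[|s]] g := by
  rw [indepFun_iff_measure_inter_preimage_eq_mul]
  intro t u ht hu
  simp only [cond_apply hs, Set.inter_comm s]
  rcases eq_or_ne (μ s) 0 with h0 | h0
  · simp [measure_mono_null Set.inter_subset_right h0]
  · calc (μ s)⁻¹ * μ (f ⁻¹' t ∩ g ⁻¹' u ∩ s)
        = (μ s)⁻¹ * (μ s)⁻¹ * (μ (f ⁻¹' t ∩ g ⁻¹' u ∩ s) * μ s) := by
          rw [mul_comm _ (μ s), ← mul_assoc, mul_assoc _ _ (μ s),
            ENNReal.inv_mul_cancel h0 (measure_ne_top μ s), mul_one]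
      _ = (μ s)⁻¹ * μ (f ⁻¹' t ∩ s) * ((μ s)⁻¹ * μ (g ⁻¹' u ∩ s)) := by
          rw [h t u ht hu]; ring

end Cond

lemma abs_comp_le_of_binary {Ω : Type*} {A : Ω → ℝ} (hA : ∀ ω, A ω = 0 ∨ A ω = 1)
    (k : ℝ → ℝ) (ω : Ω) : |k (A ω)| ≤ |k 0| + |k 1| := by
  rcases hA ω with h | h <;> simp [h]

lemma binary_mul_eq_indicator {Ω : Type*} {A : Ω → ℝ} (hA : ∀ ω, A ω = 0 ∨ A ω = 1)
    (f : Ω → ℝ) : (fun ω => A ω * f ω) = {ω | A ω = 1}.indicator f := by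
  ext ω
  rcases hA ω with h | h <;> simp [Set.indicator, h]

section Binary

variable {Ω : Type*} [MeasurableSpace Ω] {μ : Measure Ω} {A : Ω → ℝ}

lemma integral_binary_eq_measureReal (hA : ∀ ω, A ω = 0 ∨ A ω = 1) (hAm : Measurable A) :
    ∫ ω, A ω ∂μ = μ.real {ω | A ω = 1} := by
  have hS : MeasurableSet {ω | A ω = 1} := hAm (measurableSet_singleton 1)
  rw [← integral_indicator_one hS, ← binary_mul_eq_indicator hA]
  simp

lemma integral_binary_mul_eq_measureReal_mul_integral_cond [IsFiniteMeasure μ]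
    (hA : ∀ ω, A ω = 0 ∨ A ω = 1) (hAm : Measurable A) (f : Ω → ℝ) :
    ∫ ω, A ω * f ω ∂μ = μ.real {ω | A ω = 1} * ∫ ω, f ω ∂μ[|{ω | A ω = 1}] := by
  have hS : MeasurableSet {ω | A ω = 1} := hAm (measurableSet_singleton 1)
  rw [binary_mul_eq_indicator hA, integral_indicator hS,
    setIntegral_eq_measureReal_mul_integral_cond]

lemma integral_binary_mul_div_integral_eq_integral_cond [IsFiniteMeasure μ]
    (hA : ∀ ω, A ω = 0 ∨ A ω = 1) (hAm : Measurable A) (h0 : μ {ω | A ω = 1} ≠ 0)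
    (f : Ω → ℝ) :
    (∫ ω, A ω * f ω ∂μ) / ∫ ω, A ω ∂μ = ∫ ω, f ω ∂μ[|{ω | A ω = 1}] := by
  rw [integral_binary_mul_eq_measureReal_mul_integral_cond hA hAm,
    integral_binary_eq_measureReal hA hAm,
    mul_div_cancel_left₀ _ ((measureReal_ne_zero_iff).2 h0)]

lemma MeasureTheory.Integrable.mul_comp_of_binary {F : Ω → ℝ} (hF : Integrable F μ)
    (hA : ∀ ω, A ω = 0 ∨ A ω = 1) (hAm : Measurable A) {k : ℝ → ℝ} (hk : Measurable k) :
    Integrable (fun ω => F ω * k (A ω)) μ :=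
  hF.mul_bdd (c := |k 0| + |k 1|) (hk.comp hAm).aestronglyMeasurable
    (ae_of_all _ (abs_comp_le_of_binary hA k))

end Binary

section Orthogonality

variable {Ω : Type*} [MeasurableSpace Ω] {ν : Measure Ω} [IsProbabilityMeasure ν]

lemma integral_sub_integral_eq_zero {f : Ω → ℝ} (hf : Integrable f ν) :
    ∫ ω, (f ω - ∫ ω', f ω' ∂ν) ∂ν = 0 := by
  rw [integral_sub hf (integrable_const _), integral_const, probReal_univ, one_smul, sub_self]

lemma integral_add_mul_sub_mul_sub_eq_zero_of_indepFun {Y Z : Ω → ℝ} (hYZ : Y ⟂ᵢ[ν] Z)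
    (hYm : Measurable Y) (hZm : Measurable Z) (hY : Integrable Y ν)
    (hZ : ∀ ω, Z ω = 0 ∨ Z ω = 1) {d : ℝ → ℝ} (hdm : Measurable d) {C : ℝ}
    (hdC : ∀ y, |d y| ≤ C) {g : ℝ → ℝ} (hgm : Measurable g) :
    ∫ ω, (Y ω + g (Z ω)) * (Z ω - ∫ ω', Z ω' ∂ν) * (d (Y ω) - ∫ ω', d (Y ω') ∂ν) ∂ν
      = 0 := by
  set mZ := ∫ ω', Z ω' ∂ν
  set md := ∫ ω', d (Y ω') ∂ν
  have hdY : Integrable (fun ω => d (Y ω)) ν :=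
    .of_bound (hdm.comp hYm).aestronglyMeasurable C (ae_of_all _ fun ω => hdC (Y ω))
  have hZi : Integrable Z ν :=
    .of_bound hZm.aestronglyMeasurable _ (ae_of_all _ (abs_comp_le_of_binary hZ id))
  have hYd : Integrable (fun ω => Y ω * (d (Y ω) - md)) ν :=
    hY.mul_bdd (c := C + |md|) ((hdm.comp hYm).sub_const md).aestronglyMeasurable
      (ae_of_all _ fun ω => (abs_sub _ _).trans (by gcongr; exact hdC _))
  have hYpart : Integrable (fun ω => Y ω * (d (Y ω) - md) * (Z ω - mZ)) ν :=
    hYd.mul_comp_of_binary hZ hZm (k := (· - mZ)) (by fun_prop)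
  have hZpart : Integrable (fun ω => (d (Y ω) - md) * (g (Z ω) * (Z ω - mZ))) ν :=
    (hdY.sub (integrable_const md)).mul_comp_of_binary hZ hZm
      (k := fun z => g z * (z - mZ)) (by fun_prop)
  calc _ = ∫ ω, (Y ω * (d (Y ω) - md) * (Z ω - mZ)
        + (d (Y ω) - md) * (g (Z ω) * (Z ω - mZ))) ∂ν := by
        congr 1; ext ω; ring
    _ = (∫ ω, Y ω * (d (Y ω) - md) ∂ν) * (∫ ω, (Z ω - mZ) ∂ν)
        + (∫ ω, (d (Y ω) - md) ∂ν) * ∫ ω, g (Z ω) * (Z ω - mZ) ∂ν := by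
        rw [integral_add hYpart hZpart]
        congr 1
        · exact hYZ.integral_fun_comp_mul_comp (f := fun y => y * (d y - md))
            (g := fun z => z - mZ) hYm.aemeasurable hZm.aemeasurable
            (by fun_prop) (by fun_prop)
        · exact hYZ.integral_fun_comp_mul_comp (f := fun y => d y - md)
            (g := fun z => g z * (z - mZ)) hYm.aemeasurable hZm.aemeasurable
            (by fun_prop) (by fun_prop)
    _ = 0 := by
        rw [integral_sub_integral_eq_zero hZi, integral_sub_integral_eq_zero hdY]
        ring

end Orthogonality

theorem eif_projection_vanishes_general
    (Ω : Type*) [MeasurableSpace Ω] (μ : Measure Ω) [IsProbabilityMeasure μ]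
    (A Z Y : Ω → ℝ) (hAm : Measurable A) (hZm : Measurable Z) (hYm : Measurable Y)
    (hA : ∀ ω, A ω = 0 ∨ A ω = 1) (hZ : ∀ ω, Z ω = 0 ∨ Z ω = 1)
    (hPA : 0 < ∫ ω, A ω ∂μ) (hY2 : MemLp Y 2 μ)
    -- conditional independence Y ⟂ Z | A = 1
    (hindep : ∀ s t : Set ℝ, MeasurableSet s → MeasurableSet t →
      μ ({ω | Y ω ∈ s} ∩ {ω | Z ω ∈ t} ∩ {ω | A ω = 1}) * μ {ω | A ω = 1}
        = μ ({ω | Y ω ∈ s} ∩ {ω | A ω = 1}) * μ ({ω | Z ω ∈ t} ∩ {ω | A ω = 1}))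
    -- nuisance quantities (conditionally on X, hence constants)
    (p0 p1 π0 π1 e0 e1 δc ψc : ℝ)
    (mZ : ℝ) (hmZ : mZ = (∫ ω, A ω * Z ω ∂μ) / (∫ ω, A ω ∂μ))
    (EIF : Ω → ℝ)
    (hEIF : ∀ ω, EIF ω = (1 / ∫ ω', A ω' ∂μ) *
      (A ω * (Y ω + δc - ψc)
        + (p1 * π1 + p0 * π0) * ((2 * Z ω - 1) / (Z ω * π1 + (1 - Z ω) * π0))
            * (1 / (p1 - p0))
            * (Y ω * (1 - A ω) - (Z ω * e1 + (1 - Z ω) * e0)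
                - (A ω - (Z ω * p1 + (1 - Z ω) * p0)) * δc))) :
    ∀ d : ℝ → ℝ, Measurable d → (∃ Cd : ℝ, ∀ y, |d y| ≤ Cd) →
      ∫ ω, EIF ω * (A ω * (Z ω - mZ)
          * (d (Y ω) - (∫ ω', A ω' * d (Y ω') ∂μ) / (∫ ω', A ω' ∂μ))) ∂μ = 0 := by
  rintro d hdm ⟨C, hdC⟩
  set P := ∫ ω, A ω ∂μ
  set S := {ω | A ω = 1}
  have hS : MeasurableSet S := hAm (measurableSet_singleton 1)
  have hS0 : μ S ≠ 0 := by
    rw [← measureReal_ne_zero_iff, ← integral_binary_eq_measureReal hA hAm]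
    exact hPA.ne'
  have : IsProbabilityMeasure μ[|S] := cond_isProbabilityMeasure hS0
  have hYZ : Y ⟂ᵢ[μ[|S]] Z := indepFun_cond_of_measure_inter_mul_eq hS hindep
  set g : ℝ → ℝ := fun z => δc - ψc
      + (p1 * π1 + p0 * π0) * ((2 * z - 1) / (z * π1 + (1 - z) * π0)) * (1 / (p1 - p0))
      * (-(z * e1 + (1 - z) * e0) - (1 - (z * p1 + (1 - z) * p0)) * δc)
  have hEIF_treated : ∀ ω, EIF ω * A ω = A ω * ((1 / P) * (Y ω + g (Z ω))) := by
    intro ω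
    rcases hA ω with h | h <;> simp only [hEIF, h, g] <;> ring
  rw [hmZ, integral_binary_mul_div_integral_eq_integral_cond hA hAm hS0,
    integral_binary_mul_div_integral_eq_integral_cond hA hAm hS0]
  calc _ = ∫ ω, A ω * ((1 / P) * ((Y ω + g (Z ω)) * (Z ω - ∫ ω', Z ω' ∂μ[|S])
          * (d (Y ω) - ∫ ω', d (Y ω') ∂μ[|S]))) ∂μ := by
        congr 1; ext ω
        linear_combination
          (Z ω - ∫ ω', Z ω' ∂μ[|S]) * (d (Y ω) - ∫ ω', d (Y ω') ∂μ[|S]) * hEIF_treated ω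
    _ = μ.real S * ((1 / P) * ∫ ω, (Y ω + g (Z ω)) * (Z ω - ∫ ω', Z ω' ∂μ[|S])
          * (d (Y ω) - ∫ ω', d (Y ω') ∂μ[|S]) ∂μ[|S]) := by
        rw [integral_binary_mul_eq_measureReal_mul_integral_cond hA hAm, integral_const_mul]
    _ = 0 := by
        rw [integral_add_mul_sub_mul_sub_eq_zero_of_indepFun hYZ hYm hZm
          (hY2.integrable one_le_two).cond hZ hdm hdC (by fun_prop), mul_zero, mul_zero]

/-- Under `Y ⟂ Z | A=1` (working conditionally on the covariates `X`,
which are suppressed as in the paper's appendix), the projection of the MIV efficient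
influence function
`EIF = (1/pr(A=1))[A{Y+δ−ψ} + ρ((2Z−1)/π_Z)Ω{Y(1−A)−e_Z−(A−p_Z)δ}]`
onto `Λ^⊥ = span{A(Z−E[Z|A=1])(d(Y)−E[d(Y)|A=1])}` vanishes: the associated function
`c*` does not depend on `Y`, hence `c* − E[c*|A=1] = 0`, and consequently the EIF under
the nonparametric model remains the EIF under the submodel restricted by `Y ⟂ Z | A=1`.
This is expressed as: the EIF is orthogonal in `L²(P)` to every element
`A(Z−mZ)(d(Y)−md)` of `Λ^⊥`, so its orthogonal projection onto `Λ^⊥` is `0`. -/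
theorem eif_projection_vanishes
    (Ω : Type*) [MeasurableSpace Ω] (μ : Measure Ω) [IsProbabilityMeasure μ]
    (A Z Y : Ω → ℝ) (hAm : Measurable A) (hZm : Measurable Z) (hYm : Measurable Y)
    (hA : ∀ ω, A ω = 0 ∨ A ω = 1) (hZ : ∀ ω, Z ω = 0 ∨ Z ω = 1)
    (hPA : 0 < ∫ ω, A ω ∂μ) (hY2 : MemLp Y 2 μ)
    -- conditional independence Y ⟂ Z | A = 1
    (hindep : ∀ s t : Set ℝ, MeasurableSet s → MeasurableSet t →
      μ ({ω | Y ω ∈ s} ∩ {ω | Z ω ∈ t} ∩ {ω | A ω = 1}) * μ {ω | A ω = 1}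
        = μ ({ω | Y ω ∈ s} ∩ {ω | A ω = 1}) * μ ({ω | Z ω ∈ t} ∩ {ω | A ω = 1}))
    -- nuisance quantities (conditionally on X, hence constants)
    (p0 p1 π0 π1 e0 e1 δc ψc : ℝ)
    (hπ1pos : π1 ∈ Set.Ioo (0:ℝ) 1) (hπ01 : π0 = 1 - π1) (hgap : p1 ≠ p0)
    (hδ : δc = (e1 - e0) / (p1 - p0))
    (mZ : ℝ) (hmZ : mZ = (∫ ω, A ω * Z ω ∂μ) / (∫ ω, A ω ∂μ))
    (EIF : Ω → ℝ)
    (hEIF : ∀ ω, EIF ω = (1 / ∫ ω', A ω' ∂μ) *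
      (A ω * (Y ω + δc - ψc)
        + (p1 * π1 + p0 * π0) * ((2 * Z ω - 1) / (Z ω * π1 + (1 - Z ω) * π0))
            * (1 / (p1 - p0))
            * (Y ω * (1 - A ω) - (Z ω * e1 + (1 - Z ω) * e0)
                - (A ω - (Z ω * p1 + (1 - Z ω) * p0)) * δc))) :
    ∀ d : ℝ → ℝ, Measurable d → (∃ Cd : ℝ, ∀ y, |d y| ≤ Cd) →
      ∫ ω, EIF ω * (A ω * (Z ω - mZ)
          * (d (Y ω) - (∫ ω', A ω' * d (Y ω') ∂μ) / (∫ ω', A ω' ∂μ))) ∂μ = 0 :=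
  eif_projection_vanishes_general Ω μ A Z Y hAm hZm hYm hA hZ hPA hY2 hindep p0 p1 π0 π1 e0 e1 δc ψc
    mZ hmZ EIF hEIF
end
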